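/- arXiv:2206.07141 — 7 statements merged into one kernel-verified Lean document; each statement's English description precedes it below -/
import Mathlib

section
/- Let (G, ℋ) be a proper pair. The following are equivalent: (1) there is a compact subset S ⊆ G such that G is algebraically generated by S together with the union of the members of ℋ; (2) there exists a Cayley-Abels graph of G with respect to ℋ. -/
open MulAction

universe u v

/-- A topological group is compactly generated if it has a compact subset that
generates it algebraically. -/
def IsCompactlyGeneratedGroup (G : Type*) [Group G] [TopologicalSpace G] : Prop :=
  ∃ S : Set G, IsCompact S ∧ Subgroup.closure S = ⊤

/-- A topological group `G` is compactly presented if there are a compact generating set `S`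
and `n : ℕ` such that the kernel of the canonical map `FreeGroup S →* G` is generated as a
normal subgroup by its elements of word length at most `n`. -/
def IsCompactlyPresentedGroup (G : Type*) [Group G] [TopologicalSpace G] : Prop :=
  ∃ (S : Set G) (n : ℕ), IsCompact S ∧ Subgroup.closure S = ⊤ ∧
    Subgroup.normalClosure
      {x : FreeGroup S |
        x ∈ (FreeGroup.lift (fun s : S => (s : G))).ker ∧
          ∃ l : List (S × Bool), FreeGroup.mk l = x ∧ l.length ≤ n} =
      (FreeGroup.lift (fun s : S => (s : G))).ker

/-- A topological group is coherent if every closed compactly generated subgroup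
(with the subspace topology) is compactly presented. -/
def IsCoherentGroup (G : Type*) [Group G] [TopologicalSpace G] : Prop :=
  ∀ Q : Subgroup G, IsClosed (Q : Set G) → IsCompactlyGeneratedGroup Q →
    IsCompactlyPresentedGroup Q

section Amalgam

variable {G : Type u} [Group G]

/-- The two-element family of groups `A`, `B`. -/
def amalgamFamily (A B : Subgroup G) : Bool → Type u := fun b => match b with
  | true => A
  | false => B

instance (A B : Subgroup G) : (b : Bool) → Group (amalgamFamily A B b)
  | true => inferInstanceAs (Group A)
  | false => inferInstanceAs (Group B)

/-- The inclusions of `C = A ⊓ B` into `A` and `B`. -/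
def amalgamMaps (A B : Subgroup G) : (b : Bool) → (↥(A ⊓ B) →* amalgamFamily A B b)
  | true => Subgroup.inclusion inf_le_left
  | false => Subgroup.inclusion inf_le_right

/-- The inclusions of `A` and `B` into `G`. -/
def amalgamProj (A B : Subgroup G) : (b : Bool) → (amalgamFamily A B b →* G)
  | true => A.subtype
  | false => B.subtype

/-- The canonical homomorphism from the pushout (in the category of groups) of the
inclusions `A ⊓ B ↪ A` and `A ⊓ B ↪ B` to `G`. -/
def amalgamCanonicalHom (A B : Subgroup G) : Monoid.PushoutI (amalgamMaps A B) →* G :=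
  Monoid.PushoutI.lift (amalgamProj A B) (A ⊓ B).subtype
    (by rintro (_ | _) <;> exact MonoidHom.ext fun x => rfl)

/-- `G` splits as the amalgamated free product `A ∗_(A ⊓ B) B` if the canonical homomorphism
from the pushout of the inclusions to `G` is bijective. -/
def IsAmalgamatedProduct (A B : Subgroup G) : Prop :=
  Function.Bijective (amalgamCanonicalHom A B)

end Amalgam

section Graphs

variable {V : Type v}

/-- The graph obtained from `Γ` by deleting the vertex `v` (making it isolated). -/
def SimpleGraph.deleteVertex (Γ : SimpleGraph V) (v : V) : SimpleGraph V where
  Adj a b := Γ.Adj a b ∧ a ≠ v ∧ b ≠ v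
  symm := ⟨fun a b h => ⟨h.1.symm, h.2.2, h.2.1⟩⟩
  loopless := ⟨fun a h => Γ.loopless.irrefl a h.1⟩

/-- `Γ` is fine at `v` if for every neighbour `x` of `v` and every `n`, there are only
finitely many neighbours of `v` joined to `x` by a path of length at most `n` avoiding `v`;
i.e. balls of the angle metric on the neighbours of `v` are finite. -/
def SimpleGraph.FineAt (Γ : SimpleGraph V) (v : V) : Prop :=
  ∀ x ∈ Γ.neighborSet v, ∀ n : ℕ,
    {y | y ∈ Γ.neighborSet v ∧ ∃ p : (Γ.deleteVertex v).Walk x y, p.length ≤ n}.Finite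

/-- A graph is fine if it is fine at every vertex. -/
def SimpleGraph.Fine (Γ : SimpleGraph V) : Prop := ∀ v : V, Γ.FineAt v

/-- A connected graph is hyperbolic if its path metric satisfies the four point condition
up to an additive constant. -/
def SimpleGraph.IsHyperbolic (Γ : SimpleGraph V) : Prop :=
  ∃ δ : ℝ, 0 ≤ δ ∧ ∀ x y z w : V,
    (Γ.dist x y + Γ.dist z w : ℝ) ≤
      max ((Γ.dist x z + Γ.dist y w : ℝ)) ((Γ.dist x w + Γ.dist y z : ℝ)) + δ

/-- Two graphs (with their path metrics) are quasi-isometric. -/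
def QuasiIsometricGraphs {V₁ : Type*} {V₂ : Type*}
    (Γ₁ : SimpleGraph V₁) (Γ₂ : SimpleGraph V₂) : Prop :=
  ∃ (f : V₁ → V₂) (L C : ℝ), 1 ≤ L ∧ 0 ≤ C ∧
    (∀ x y : V₁,
      L⁻¹ * (Γ₁.dist x y : ℝ) - C ≤ (Γ₂.dist (f x) (f y) : ℝ) ∧
      (Γ₂.dist (f x) (f y) : ℝ) ≤ L * (Γ₁.dist x y : ℝ) + C) ∧
    ∀ z : V₂, ∃ x : V₁, (Γ₂.dist z (f x) : ℝ) ≤ C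

end Graphs

section GGraphs

variable (G : Type u) [Group G] [TopologicalSpace G] {V : Type v} [MulAction G V]

/-- The action of `G` on the vertices of `Γ` is by graph automorphisms. -/
def IsGraphAction (Γ : SimpleGraph V) : Prop :=
  ∀ (g : G) (a b : V), Γ.Adj a b → Γ.Adj (g • a) (g • b)

/-- The action is discrete: all vertex stabilizers are open. -/
def IsDiscreteAction (Γ : SimpleGraph V) : Prop :=
  ∀ v : V, IsOpen ((stabilizer G v : Subgroup G) : Set G)

/-- The action is cocompact: finitely many orbits of vertices and of edges. -/
def IsCocompactAction (Γ : SimpleGraph V) : Prop :=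
  (∃ s : Set V, s.Finite ∧ ∀ v : V, ∃ g : G, g • v ∈ s) ∧
  (∃ t : Set (V × V), t.Finite ∧ ∀ a b : V, Γ.Adj a b → ∃ g : G, (g • a, g • b) ∈ t)

/-- Pointwise edge stabilizers are compact. -/
def HasCompactEdgeStabilizers (Γ : SimpleGraph V) : Prop :=
  ∀ a b : V, Γ.Adj a b →
    IsCompact ((stabilizer G a ⊓ stabilizer G b : Subgroup G) : Set G)

/-- The conjugate `g H g⁻¹` of a subgroup. -/
def conjSubgroup {G : Type u} [Group G] (g : G) (H : Subgroup G) : Subgroup G :=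
  Subgroup.map (MulAut.conj g).toMonoidHom H

/-- A proper pair: `G` has a compact open subgroup, `ℋ` is a finite collection of open
subgroups, and no two distinct non-compact members of `ℋ` are conjugate. -/
def IsProperPair (G : Type u) [Group G] [TopologicalSpace G]
    (ℋ : Finset (Subgroup G)) : Prop :=
  (∃ U : Subgroup G, IsCompact (U : Set G) ∧ IsOpen (U : Set G)) ∧
  (∀ H ∈ ℋ, IsOpen ((H : Subgroup G) : Set G)) ∧
  (∀ H ∈ ℋ, ∀ K ∈ ℋ, ¬ IsCompact ((H : Subgroup G) : Set G) →
    ¬ IsCompact ((K : Subgroup G) : Set G) →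
    (∃ g : G, conjSubgroup g H = K) → H = K)

/-- `Γ` is a Cayley-Abels graph of `G` with respect to `ℋ`. -/
def IsCayleyAbelsGraph (ℋ : Finset (Subgroup G)) (Γ : SimpleGraph V) : Prop :=
  IsGraphAction G Γ ∧
  Γ.Connected ∧
  IsDiscreteAction G Γ ∧
  IsCocompactAction G Γ ∧
  HasCompactEdgeStabilizers G Γ ∧
  (∀ v : V, IsCompact ((stabilizer G v : Subgroup G) : Set G) ∨
    ∃ H ∈ ℋ, ∃ g : G, stabilizer G v = conjSubgroup g H) ∧
  (∀ H ∈ ℋ, ∃ v : V, stabilizer G v = H) ∧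
  (∀ H ∈ ℋ, ¬ IsCompact ((H : Subgroup G) : Set G) →
    ∀ u v : V, stabilizer G u = H → stabilizer G v = H → ∃ g : G, g • u = v)

end GGraphs

/-!
If `S ∪ ⋃ ℋ` generates `G`, pick a compact open subgroup `U` and a finite `F` with `S ⊆ F U`.
The graph on the cosets `G ⧸ U` and `G ⧸ H` (`H ∈ ℋ`) in which `xU` is joined to `xfU` and to
`xH` is connected because the generators move `U` along paths of length at most two, and every
edge has an endpoint `xU` whose stabilizer `xUx⁻¹` is compact.

Conversely, given a cocompact action on a connected graph, fix finitely many representatives of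
the vertex and edge orbits. The subgroup generated by the stabilizers of the representative
vertices and finitely many elements realising the orbit relations among them moves the
representatives onto a set of vertices closed under adjacency, hence is all of `G`. Compact
stabilizers go into `S`, and the others are conjugates of members of `ℋ`.
-/

open scoped Pointwise

section Subgroups

variable {G : Type u} [Group G]

theorem conjSubgroup_le {g : G} {H K : Subgroup G} (hg : g ∈ K) (hHK : H ≤ K) :
    conjSubgroup g H ≤ K :=
  Subgroup.map_le_iff_le_comap.2 fun h hh => by
    simpa using K.mul_mem (K.mul_mem hg (hHK hh)) (K.inv_mem hg)

theorem stabilizer_smul_eq_conjSubgroup {V : Type v} [MulAction G V] (g : G) (v : V) :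
    stabilizer G (g • v) = conjSubgroup g (stabilizer G v) :=
  stabilizer_smul_eq_stabilizer_map_conj g v

theorem Sum.stabilizer_inl {α β : Type*} [MulAction G α] [MulAction G β] (a : α) :
    stabilizer G (Sum.inl a : α ⊕ β) = stabilizer G a := by
  ext g
  simp [mem_stabilizer_iff, Sum.smul_inl]

theorem Sum.stabilizer_inr {α β : Type*} [MulAction G α] [MulAction G β] (b : β) :
    stabilizer G (Sum.inr b : α ⊕ β) = stabilizer G b := by
  ext g
  simp [mem_stabilizer_iff, Sum.smul_inr]

theorem Sigma.stabilizer_mk {ι : Type*} {α : ι → Type*} [∀ i, MulAction G (α i)] (i : ι)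
    (a : α i) : stabilizer G (⟨i, a⟩ : Σ i, α i) = stabilizer G a := by
  ext g
  simp [mem_stabilizer_iff, Sigma.smul_mk]

variable [TopologicalSpace G] [IsTopologicalGroup G]

theorem coe_conjSubgroup (g : G) (H : Subgroup G) :
    (conjSubgroup g H : Set G) = (Homeomorph.mulLeft g).trans (Homeomorph.mulRight g⁻¹) '' H := by
  ext x
  simp [conjSubgroup]

theorem isCompact_conjSubgroup_iff {g : G} {H : Subgroup G} :
    IsCompact (conjSubgroup g H : Set G) ↔ IsCompact (H : Set G) := by
  rw [coe_conjSubgroup, Homeomorph.isCompact_image]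

theorem isOpen_conjSubgroup_iff {g : G} {H : Subgroup G} :
    IsOpen (conjSubgroup g H : Set G) ↔ IsOpen (H : Set G) := by
  rw [coe_conjSubgroup, Homeomorph.isOpen_image]

theorem IsCompact.exists_finite_subset_mul_of_isOpen {S : Set G} (hS : IsCompact S)
    {U : Subgroup G} (hU : IsOpen (U : Set G)) :
    ∃ F : Set G, F.Finite ∧ S ⊆ F * U := by
  obtain ⟨t, ht⟩ := compact_covered_by_mul_left_translates hS
    (by rw [hU.interior_eq]; exact ⟨1, U.one_mem⟩)
  refine ⟨(t : Set G)⁻¹, t.finite_toSet.inv, fun x hx => ?_⟩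
  obtain ⟨g, hg, hgx⟩ := Set.mem_iUnion₂.1 (ht hx)
  exact ⟨g⁻¹, by simpa using hg, g * x, hgx, by group⟩

end Subgroups

section GraphAction

variable {G : Type u} [Group G] {V : Type v} [MulAction G V] {Γ : SimpleGraph V}

theorem IsGraphAction.reachable_smul (hΓ : IsGraphAction G Γ) (g : G) {u v : V}
    (h : Γ.Reachable u v) : Γ.Reachable (g • u) (g • v) :=
  h.map ⟨(g • ·), hΓ g _ _⟩

theorem IsGraphAction.reachable_smul_of_mem_closure (hΓ : IsGraphAction G Γ) {o : V}
    {T : Set G} (hT : ∀ t ∈ T, Γ.Reachable o (t • o)) {g : G} (hg : g ∈ Subgroup.closure T) :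
    Γ.Reachable o (g • o) := by
  induction hg using Subgroup.closure_induction with
  | mem t ht => exact hT t ht
  | one => rw [one_smul]
  | mul x y _ _ hx hy => exact hx.trans (by simpa [mul_smul] using hΓ.reachable_smul x hy)
  | inv x _ hx => simpa using (hΓ.reachable_smul x⁻¹ hx).symm

theorem IsGraphAction.eq_top_of_connected (hΓ : IsGraphAction G Γ) (hconn : Γ.Connected)
    {K : Subgroup G} {s : Set V} {w₀ : V} (hw₀ : w₀ ∈ s)
    (hK : ∀ w ∈ s, ∀ g : G, g • w ∈ s → g ∈ K)
    (hadj : ∀ w ∈ s, ∀ y : V, Γ.Adj w y → ∃ k ∈ K, k⁻¹ • y ∈ s) : K = ⊤ := by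
  have step : ∀ x y : V, Γ.Adj x y → (∃ k ∈ K, k⁻¹ • x ∈ s) → ∃ k ∈ K, k⁻¹ • y ∈ s := by
    rintro x y hxy ⟨k, hk, hx⟩
    obtain ⟨k', hk', hy⟩ := hadj _ hx _ (hΓ k⁻¹ x y hxy)
    exact ⟨k * k', K.mul_mem hk hk', by rwa [mul_inv_rev, mul_smul]⟩
  have hall : ∀ v : V, ∃ k ∈ K, k⁻¹ • v ∈ s := by
    suffices ∀ u v, Γ.Walk u v → (∃ k ∈ K, k⁻¹ • u ∈ s) → ∃ k ∈ K, k⁻¹ • v ∈ s from fun v =>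
      this w₀ v (hconn.preconnected w₀ v).some ⟨1, K.one_mem, by rwa [inv_one, one_smul]⟩
    intro u v q
    induction q with
    | nil => exact id
    | cons h _ ih => exact fun hu => ih (step _ _ h hu)
  rw [eq_top_iff]
  intro g _
  obtain ⟨k, hk, hg⟩ := hall (g • w₀)
  have := K.mul_mem hk (hK w₀ hw₀ _ (by rwa [mul_smul]))
  rwa [mul_inv_cancel_left] at this

theorem IsDiscreteAction.hasCompactEdgeStabilizers [TopologicalSpace G] [IsTopologicalGroup G]
    (hdisc : IsDiscreteAction G Γ)
    (h : ∀ a b : V, Γ.Adj a b →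
      IsCompact (stabilizer G a : Set G) ∨ IsCompact (stabilizer G b : Set G)) :
    HasCompactEdgeStabilizers G Γ := by
  intro a b hab
  rw [Subgroup.coe_inf]
  rcases h a b hab with ha | hb
  · exact ha.inter_right ((stabilizer G b).isClosed_of_isOpen (hdisc b))
  · exact hb.inter_left ((stabilizer G a).isClosed_of_isOpen (hdisc a))

end GraphAction

section OrbitGraph

variable {G : Type u} [Group G] {V : Type v} [MulAction G V]

variable (G) in
def orbitGraph (E : Set (V × V)) : SimpleGraph V :=
  SimpleGraph.fromRel fun u v => ∃ g : G, g • (u, v) ∈ E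

theorem isGraphAction_orbitGraph (E : Set (V × V)) : IsGraphAction G (orbitGraph G E) := by
  intro g a b hab
  rw [orbitGraph, SimpleGraph.fromRel_adj] at hab ⊢
  have translate : ∀ x y : V, (∃ k : G, k • (x, y) ∈ E) → ∃ k : G, k • (g • x, g • y) ∈ E :=
    fun x y ⟨k, hk⟩ => ⟨k * g⁻¹, by simpa [mul_smul] using hk⟩
  exact ⟨(MulAction.injective g).ne hab.1, hab.2.imp (translate a b) (translate b a)⟩

theorem exists_smul_mem_of_orbitGraph_adj {E : Set (V × V)} {u v : V}
    (h : (orbitGraph G E).Adj u v) : ∃ g : G, g • (u, v) ∈ E ∨ g • (v, u) ∈ E := by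
  obtain ⟨-, ⟨g, hg⟩ | ⟨g, hg⟩⟩ := (SimpleGraph.fromRel_adj _ _ _).1 h
  exacts [⟨g, .inl hg⟩, ⟨g, .inr hg⟩]

theorem orbitGraph_reachable_of_mem {E : Set (V × V)} {e : V × V} (he : e ∈ E) :
    (orbitGraph G E).Reachable e.1 e.2 := by
  by_cases h : e.1 = e.2
  · rw [h]
  · exact ((SimpleGraph.fromRel_adj _ _ _).2 ⟨h, .inl ⟨1, by simpa using he⟩⟩).reachable

theorem isCocompactAction_orbitGraph {E : Set (V × V)} (hE : E.Finite)
    (hV : ∃ s : Set V, s.Finite ∧ ∀ v : V, ∃ g : G, g • v ∈ s) :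
    IsCocompactAction G (orbitGraph G E) := by
  refine ⟨hV, E ∪ Prod.swap '' E, hE.union (hE.image _), fun a b hab => ?_⟩
  obtain ⟨g, hg | hg⟩ := exists_smul_mem_of_orbitGraph_adj hab
  exacts [⟨g, .inl hg⟩, ⟨g, .inr ⟨_, hg, rfl⟩⟩]

end OrbitGraph

section Generation

variable {G : Type u} [Group G] {V : Type v} [MulAction G V] {Γ : SimpleGraph V}

theorem IsGraphAction.exists_finite_closure_union_stabilizer_eq_top (hΓ : IsGraphAction G Γ)
    (hconn : Γ.Connected) (hco : IsCocompactAction G Γ) :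
    ∃ s : Set V, s.Finite ∧ ∃ F : Set G, F.Finite ∧
      Subgroup.closure (F ∪ ⋃ w ∈ s, (stabilizer G w : Set G)) = ⊤ := by
  obtain ⟨⟨s, hs, hσ⟩, t, ht, htΓ⟩ := hco
  choose σ hσ using hσ
  have : ∀ w w' : V, ∃ c : G, (∃ g : G, g • w = w') → c • w = w' := fun w w' =>
    (em (∃ g : G, g • w = w')).elim (fun ⟨g, hg⟩ => ⟨g, fun _ => hg⟩)
      fun h => ⟨1, fun h' => (h h').elim⟩
  choose c hc using this
  set F : Set G := (fun p : V × V => c p.1 p.2) '' s ×ˢ s ∪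
    (fun e : V × V => σ e.1 * (σ e.2)⁻¹) '' t
  refine ⟨s, hs, F, ((hs.prod hs).image _).union (ht.image _), ?_⟩
  set K := Subgroup.closure (F ∪ ⋃ w ∈ s, (stabilizer G w : Set G))
  have hFK : F ⊆ K := fun x hx => Subgroup.subset_closure (.inl hx)
  have hK : ∀ w ∈ s, ∀ g : G, g • w ∈ s → g ∈ K := by
    intro w hw g hg
    have hcw : c w (g • w) • w = g • w := hc _ _ ⟨g, rfl⟩
    have hstab : (c w (g • w))⁻¹ * g ∈ K := Subgroup.subset_closure
      (.inr (Set.mem_biUnion hw (mem_stabilizer_iff.2 (by rw [mul_smul, inv_smul_eq_iff, hcw]))))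
    have := K.mul_mem (hFK (.inl ⟨(w, g • w), ⟨hw, hg⟩, rfl⟩)) hstab
    rwa [mul_inv_cancel_left] at this
  obtain ⟨v₀⟩ := hconn.nonempty
  refine hΓ.eq_top_of_connected hconn (hσ v₀) hK fun w hw y hwy => ?_
  -- `g` carries the edge `(w, y)` into `t`, and then `σ (g • y) * g` moves `y` into `s`.
  obtain ⟨g, hg⟩ := htΓ w y hwy
  have hw' : σ (g • w) * g ∈ K := hK w hw _ (by rw [mul_smul]; exact hσ _)
  have hF' : σ (g • w) * (σ (g • y))⁻¹ ∈ K := hFK (.inr ⟨_, hg, rfl⟩)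
  refine ⟨(σ (g • y) * g)⁻¹, ?_, by simpa [mul_smul] using hσ (g • y)⟩
  convert K.mul_mem (K.inv_mem hw') hF' using 1
  group

theorem IsCayleyAbelsGraph.exists_isCompact_closure_eq_top [TopologicalSpace G]
    {ℋ : Finset (Subgroup G)} (hCA : IsCayleyAbelsGraph G ℋ Γ) :
    ∃ S : Set G, IsCompact S ∧ Subgroup.closure (S ∪ ⋃ H ∈ ℋ, (H : Set G)) = ⊤ := by
  obtain ⟨hΓ, hconn, -, hco, -, hstab, -, -⟩ := hCA
  obtain ⟨s, hs, F, hF, hgen⟩ := hΓ.exists_finite_closure_union_stabilizer_eq_top hconn hco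
  have : ∀ w : V, ∃ g : G, IsCompact (stabilizer G w : Set G) ∨
      ∃ H ∈ ℋ, stabilizer G w = conjSubgroup g H := fun w =>
    (hstab w).elim (fun h => ⟨1, .inl h⟩) fun ⟨H, hH, g, hg⟩ => ⟨g, .inr ⟨H, hH, hg⟩⟩
  choose γ hγ using this
  refine ⟨F ∪ γ '' s ∪ ⋃ w ∈ {w ∈ s | IsCompact (stabilizer G w : Set G)}, stabilizer G w,
    (hF.union (hs.image γ)).isCompact.union ((hs.sep _).isCompact_biUnion fun w hw => hw.2), ?_⟩
  rw [eq_top_iff, ← hgen, Subgroup.closure_le]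
  rintro x (hx | hx)
  · exact Subgroup.subset_closure (.inl (.inl (.inl hx)))
  obtain ⟨w, hw, hx⟩ := Set.mem_iUnion₂.1 hx
  rcases hγ w with hc | ⟨H, hH, hwH⟩
  · exact Subgroup.subset_closure (.inl (.inr (Set.mem_biUnion ⟨hw, hc⟩ hx)))
  rw [hwH] at hx
  refine conjSubgroup_le (Subgroup.subset_closure (.inl (.inl (.inr ⟨w, hw, rfl⟩)))) ?_ hx
  exact fun h hh => Subgroup.subset_closure (.inr (Set.mem_biUnion hH hh))

end Generation

section CosetGraph

variable {G : Type u} [Group G] (U : Subgroup G) (ℋ : Finset (Subgroup G))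

abbrev CosetVertex : Type u := (G ⧸ U) ⊕ Σ H : ℋ, G ⧸ (H : Subgroup G)

def baseVertex : CosetVertex U ℋ := .inl ((1 : G) : G ⧸ U)

def peripheralVertex (H : ℋ) : CosetVertex U ℋ := .inr ⟨H, ((1 : G) : G ⧸ (H : Subgroup G))⟩

/-- The vertex `xU` is joined to `xfU` (`f ∈ F`) and to `xH` (`H ∈ ℋ`). -/
def cosetEdges (F : Set G) : Set (CosetVertex U ℋ × CosetVertex U ℋ) :=
  (fun f => (baseVertex U ℋ, f • baseVertex U ℋ)) '' F ∪
    Set.range fun H => (baseVertex U ℋ, peripheralVertex U ℋ H)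

def cosetGraph (F : Set G) : SimpleGraph (CosetVertex U ℋ) :=
  orbitGraph G (cosetEdges U ℋ F)

variable {U ℋ}

theorem isGraphAction_cosetGraph (F : Set G) : IsGraphAction G (cosetGraph U ℋ F) :=
  isGraphAction_orbitGraph _

theorem stabilizer_baseVertex : stabilizer G (baseVertex U ℋ) = U := by
  rw [baseVertex, Sum.stabilizer_inl, stabilizer_quotient]

theorem stabilizer_peripheralVertex (H : ℋ) :
    stabilizer G (peripheralVertex U ℋ H) = H := by
  rw [peripheralVertex, Sum.stabilizer_inr, Sigma.stabilizer_mk, stabilizer_quotient]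

theorem CosetVertex.exists_eq_smul (v : CosetVertex U ℋ) :
    ∃ g : G, v = g • baseVertex U ℋ ∨ ∃ H, v = g • peripheralVertex U ℋ H := by
  rcases v with a | ⟨H, b⟩
  · obtain ⟨g, rfl⟩ := QuotientGroup.mk_surjective a
    exact ⟨g, .inl (by simp [baseVertex, Sum.smul_inl])⟩
  · obtain ⟨g, rfl⟩ := QuotientGroup.mk_surjective b
    exact ⟨g, .inr ⟨H, by simp [peripheralVertex, Sum.smul_inr, Sigma.smul_mk]⟩⟩

theorem exists_eq_smul_baseVertex_of_adj {F : Set G} {u v : CosetVertex U ℋ}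
    (h : (cosetGraph U ℋ F).Adj u v) :
    ∃ g : G, u = g • baseVertex U ℋ ∨ v = g • baseVertex U ℋ := by
  have hfst : ∀ e ∈ cosetEdges U ℋ F, e.1 = baseVertex U ℋ := by
    rintro _ (⟨f, -, rfl⟩ | ⟨H, rfl⟩) <;> rfl
  obtain ⟨g, hg | hg⟩ := exists_smul_mem_of_orbitGraph_adj h
  exacts [⟨g⁻¹, .inl (eq_inv_smul_iff.2 (hfst _ hg))⟩,
    ⟨g⁻¹, .inr (eq_inv_smul_iff.2 (hfst _ hg))⟩]

theorem cosetGraph_connected {F S : Set G} (hSF : S ⊆ F * U)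
    (hgen : Subgroup.closure (S ∪ ⋃ H ∈ ℋ, (H : Set G)) = ⊤) :
    (cosetGraph U ℋ F).Connected := by
  have hΓ := isGraphAction_cosetGraph (U := U) (ℋ := ℋ) F
  have hedge : ∀ e ∈ cosetEdges U ℋ F, (cosetGraph U ℋ F).Reachable e.1 e.2 :=
    fun _ => orbitGraph_reachable_of_mem
  have hbase : ∀ g : G, (cosetGraph U ℋ F).Reachable (baseVertex U ℋ) (g • baseVertex U ℋ) := by
    refine fun g => hΓ.reachable_smul_of_mem_closure ?_ (hgen ▸ Subgroup.mem_top g)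
    rintro t (ht | ht)
    · obtain ⟨f, hf, u, hu, rfl⟩ := hSF ht
      have hu : u • baseVertex U ℋ = baseVertex U ℋ := by
        rwa [← mem_stabilizer_iff, stabilizer_baseVertex]
      rw [mul_smul, hu]
      exact hedge _ (.inl ⟨f, hf, rfl⟩)
    · obtain ⟨H, hH, ht⟩ := Set.mem_iUnion₂.1 ht
      have hp : t • peripheralVertex U ℋ ⟨H, hH⟩ = peripheralVertex U ℋ ⟨H, hH⟩ := by
        rwa [← mem_stabilizer_iff, stabilizer_peripheralVertex]
      have e := hedge _ (.inr ⟨⟨H, hH⟩, rfl⟩)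
      exact e.trans (by simpa [hp] using (hΓ.reachable_smul t e).symm)
  refine (SimpleGraph.connected_iff_exists_forall_reachable _).2 ⟨baseVertex U ℋ, fun v => ?_⟩
  obtain ⟨g, rfl | ⟨H, rfl⟩⟩ := v.exists_eq_smul
  · exact hbase g
  · exact (hbase g).trans (hΓ.reachable_smul g (hedge _ (.inr ⟨H, rfl⟩)))

variable [TopologicalSpace G] [IsTopologicalGroup G]

theorem isCompact_stabilizer_smul_baseVertex (hU : IsCompact (U : Set G)) (g : G) :
    IsCompact (stabilizer G (g • baseVertex U ℋ) : Set G) := by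
  rwa [stabilizer_smul_eq_conjSubgroup, isCompact_conjSubgroup_iff, stabilizer_baseVertex]

theorem isDiscreteAction_cosetGraph (hU : IsOpen (U : Set G))
    (hℋ : ∀ H ∈ ℋ, IsOpen (H : Set G)) (F : Set G) : IsDiscreteAction G (cosetGraph U ℋ F) := by
  intro v
  obtain ⟨g, rfl | ⟨H, rfl⟩⟩ := v.exists_eq_smul
  · rwa [stabilizer_smul_eq_conjSubgroup, isOpen_conjSubgroup_iff, stabilizer_baseVertex]
  · rw [stabilizer_smul_eq_conjSubgroup, isOpen_conjSubgroup_iff, stabilizer_peripheralVertex]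
    exact hℋ H H.2

theorem exists_eq_smul_peripheralVertex_of_stabilizer_eq (hU : IsCompact (U : Set G))
    (hℋ : ∀ H ∈ ℋ, ∀ K ∈ ℋ, ¬IsCompact (H : Set G) → ¬IsCompact (K : Set G) →
      (∃ g : G, conjSubgroup g H = K) → H = K)
    {H : Subgroup G} (hH : H ∈ ℋ) (hHc : ¬IsCompact (H : Set G)) {v : CosetVertex U ℋ}
    (hv : stabilizer G v = H) : ∃ g : G, v = g • peripheralVertex U ℋ ⟨H, hH⟩ := by
  obtain ⟨g, rfl | ⟨H', rfl⟩⟩ := v.exists_eq_smul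
  · exact absurd (hv ▸ isCompact_stabilizer_smul_baseVertex hU g) hHc
  rw [stabilizer_smul_eq_conjSubgroup, stabilizer_peripheralVertex] at hv
  have hH'c : ¬IsCompact (H' : Set G) := by rwa [← isCompact_conjSubgroup_iff (g := g), hv]
  obtain rfl : H' = ⟨H, hH⟩ := Subtype.ext (hℋ _ H'.2 H hH hH'c hHc ⟨g, hv⟩)
  exact ⟨g, rfl⟩

theorem isCayleyAbelsGraph_cosetGraph (hUc : IsCompact (U : Set G)) (hUo : IsOpen (U : Set G))
    (hℋo : ∀ H ∈ ℋ, IsOpen (H : Set G))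
    (hℋ : ∀ H ∈ ℋ, ∀ K ∈ ℋ, ¬IsCompact (H : Set G) → ¬IsCompact (K : Set G) →
      (∃ g : G, conjSubgroup g H = K) → H = K)
    {F S : Set G} (hF : F.Finite) (hSF : S ⊆ F * U)
    (hgen : Subgroup.closure (S ∪ ⋃ H ∈ ℋ, (H : Set G)) = ⊤) :
    IsCayleyAbelsGraph G ℋ (cosetGraph U ℋ F) := by
  have hdisc := isDiscreteAction_cosetGraph hUo hℋo F
  refine ⟨isGraphAction_cosetGraph F, cosetGraph_connected hSF hgen, hdisc, ?_,
    hdisc.hasCompactEdgeStabilizers fun a b hab => ?_, fun v => ?_,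
    fun H hH => ⟨peripheralVertex U ℋ ⟨H, hH⟩, stabilizer_peripheralVertex _⟩, ?_⟩
  · refine isCocompactAction_orbitGraph ((hF.image _).union (Set.finite_range _))
      ⟨{baseVertex U ℋ} ∪ Set.range (peripheralVertex U ℋ),
        (Set.finite_singleton _).union (Set.finite_range _), fun v => ?_⟩
    obtain ⟨g, rfl | ⟨H, rfl⟩⟩ := v.exists_eq_smul
    exacts [⟨g⁻¹, .inl (inv_smul_smul g _)⟩, ⟨g⁻¹, .inr ⟨H, (inv_smul_smul g _).symm⟩⟩]
  · obtain ⟨g, rfl | rfl⟩ := exists_eq_smul_baseVertex_of_adj hab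
    exacts [.inl (isCompact_stabilizer_smul_baseVertex hUc g),
      .inr (isCompact_stabilizer_smul_baseVertex hUc g)]
  · obtain ⟨g, rfl | ⟨H, rfl⟩⟩ := v.exists_eq_smul
    · exact .inl (isCompact_stabilizer_smul_baseVertex hUc g)
    · exact .inr ⟨H, H.2, g, by rw [stabilizer_smul_eq_conjSubgroup, stabilizer_peripheralVertex]⟩
  · intro H hH hHc u v hu hv
    obtain ⟨g, rfl⟩ := exists_eq_smul_peripheralVertex_of_stabilizer_eq hUc hℋ hH hHc hu
    obtain ⟨g', rfl⟩ := exists_eq_smul_peripheralVertex_of_stabilizer_eq hUc hℋ hH hHc hv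
    exact ⟨g' * g⁻¹, by rw [mul_smul, inv_smul_smul]⟩

end CosetGraph

theorem compactlyGeneratedRel_iff_exists_cayleyAbelsGraph_general
    {G : Type u} [Group G] [TopologicalSpace G] [IsTopologicalGroup G]
    (ℋ : Finset (Subgroup G)) (hpp : IsProperPair G ℋ) :
    (∃ S : Set G, IsCompact S ∧
        Subgroup.closure (S ∪ ⋃ H ∈ ℋ, ((H : Subgroup G) : Set G)) = ⊤) ↔
      (∃ (V : Type u) (inst : MulAction G V) (Γ : SimpleGraph V),
        @IsCayleyAbelsGraph G _ _ V inst ℋ Γ) := by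
  obtain ⟨⟨U, hUc, hUo⟩, hℋo, hℋ⟩ := hpp
  constructor
  · rintro ⟨S, hS, hgen⟩
    obtain ⟨F, hF, hSF⟩ := hS.exists_finite_subset_mul_of_isOpen hUo
    exact ⟨_, inferInstance, _, isCayleyAbelsGraph_cosetGraph hUc hUo hℋo hℋ hF hSF hgen⟩
  · rintro ⟨V, _, Γ, hCA⟩
    exact hCA.exists_isCompact_closure_eq_top

/-- Topological characterization of relative compact generation: for a proper pair
`(G, ℋ)`, `G` is compactly generated relative to `ℋ` iff there exists a Cayley-Abels
graph of `G` with respect to `ℋ`. -/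
theorem compactlyGeneratedRel_iff_exists_cayleyAbelsGraph
    {G : Type u} [Group G] [TopologicalSpace G] [IsTopologicalGroup G] [T2Space G]
    (ℋ : Finset (Subgroup G)) (hpp : IsProperPair G ℋ) :
    (∃ S : Set G, IsCompact S ∧
        Subgroup.closure (S ∪ ⋃ H ∈ ℋ, ((H : Subgroup G) : Set G)) = ⊤) ↔
      (∃ (V : Type u) (inst : MulAction G V) (Γ : SimpleGraph V),
        @IsCayleyAbelsGraph G _ _ V inst ℋ Γ) :=
  compactlyGeneratedRel_iff_exists_cayleyAbelsGraph_general ℋ hpp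
end

section
/- Let G be a Hausdorff, locally compact, totally disconnected topological group acting by graph automorphisms on a connected, locally finite simple graph Γ such that the stabilizer of every vertex is a compact open subgroup of G and there are only finitely many G-orbits of vertices. Then G is compactly generated. -/
open MulAction

universe u v

/-! Fix a vertex `a₀` of a finite set `s` meeting every orbit. The subgroup `H` generated by
the stabilizer of `a₀`, by an element moving each of the finitely many neighbours of `s` back
into `s`, and by an element moving `a₀` to each point of `s` in its orbit, satisfies
`H • s = V`: the set `H • s` is closed under adjacency, and `Γ` is connected. Hence every
`g • a₀` is some `h • a₀` with `h ∈ H`, so `g ∈ H * stabilizer G a₀ = H`. The stabilizer of `a₀`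
is compact, and local finiteness makes the other generators finitely many. -/

theorem SimpleGraph.Connected.forall_of_adj {V : Type*} {Γ : SimpleGraph V}
    (hconn : Γ.Connected) {P : V → Prop} {u : V} (hu : P u)
    (hadj : ∀ v w, Γ.Adj v w → P v → P w) (v : V) : P v := by
  obtain ⟨p⟩ := hconn u v
  induction p with
  | nil => exact hu
  | cons h _ ih => exact ih (hadj _ _ h hu)

theorem Set.Finite.exists_finite_witnesses {α β : Type*} {A : Set α} (hA : A.Finite)
    {P : α → β → Prop} (h : ∀ a ∈ A, ∃ b, P a b) :
    ∃ B : Set β, B.Finite ∧ ∀ a ∈ A, ∃ b ∈ B, P a b := by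
  have := hA.to_subtype
  choose f hf using fun a : A => h a a.2
  exact ⟨Set.range f, Set.finite_range f,
    fun a ha => ⟨f ⟨a, ha⟩, Set.mem_range_self _, hf ⟨a, ha⟩⟩⟩

theorem Subgroup.eq_top_of_stabilizer_le {G α : Type*} [Group G] [MulAction G α]
    {H : Subgroup G} {a : α} (hstab : stabilizer G a ≤ H)
    (horb : ∀ g : G, ∃ h ∈ H, h • a = g • a) : H = ⊤ := by
  refine eq_top_iff.2 fun g _ => ?_
  obtain ⟨h, hH, hga⟩ := horb g
  have : h⁻¹ * g ∈ H := hstab <| by rw [mem_stabilizer_iff, mul_smul, ← hga, inv_smul_smul]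
  simpa using mul_mem hH this

section GraphAction

variable {G V : Type*} [Group G] [MulAction G V] {Γ : SimpleGraph V}

theorem exists_smul_mem_of_isGraphAction (hact : IsGraphAction G Γ) (hconn : Γ.Connected)
    {H : Subgroup G} {s : Set V} {a₀ : V} (ha₀ : a₀ ∈ s)
    (hnbr : ∀ a ∈ s, ∀ b ∈ Γ.neighborSet a, ∃ h ∈ H, h • b ∈ s) (v : V) :
    ∃ h ∈ H, h • v ∈ s := by
  refine hconn.forall_of_adj (P := fun v => ∃ h ∈ H, h • v ∈ s) ⟨1, H.one_mem, by simpa⟩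
    ?_ v
  rintro x y hxy ⟨h, hH, hx⟩
  obtain ⟨t, htH, ht⟩ := hnbr _ hx _ (hact h x y hxy)
  exact ⟨t * h, mul_mem htH hH, by rwa [mul_smul]⟩

theorem closure_stabilizer_union_eq_top_of_isGraphAction (hact : IsGraphAction G Γ)
    (hconn : Γ.Connected) {s : Set V} {a₀ : V} (ha₀ : a₀ ∈ s) {T : Set G}
    (hnbr : ∀ a ∈ s, ∀ b ∈ Γ.neighborSet a, ∃ t ∈ T, t • b ∈ s)
    (horb : ∀ a ∈ s, a ∈ orbit G a₀ → ∃ t ∈ T, t • a₀ = a) :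
    Subgroup.closure ((stabilizer G a₀ : Set G) ∪ T) = ⊤ := by
  set H := Subgroup.closure ((stabilizer G a₀ : Set G) ∪ T)
  have hT : ∀ t ∈ T, t ∈ H := fun t ht => Subgroup.subset_closure (Or.inr ht)
  have hcover := exists_smul_mem_of_isGraphAction hact hconn ha₀
    fun a ha b hb => (hnbr a ha b hb).imp fun t ⟨htT, ht⟩ => ⟨hT t htT, ht⟩
  refine Subgroup.eq_top_of_stabilizer_le (a := a₀)
    (fun g hg => Subgroup.subset_closure (Or.inl hg)) fun g => ?_
  obtain ⟨h, hH, hg⟩ := hcover (g • a₀)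
  obtain ⟨t, htT, ht⟩ := horb _ hg ⟨h * g, mul_smul h g a₀⟩
  refine ⟨h⁻¹ * t, mul_mem (inv_mem hH) (hT t htT), ?_⟩
  rw [mul_smul, ht, inv_smul_smul]

end GraphAction

theorem isCompactlyGenerated_of_action_on_locallyFinite_graph_general
    {G : Type u} [Group G] [TopologicalSpace G]
    {V : Type v} [MulAction G V] (Γ : SimpleGraph V)
    (hact : IsGraphAction G Γ) (hconn : Γ.Connected)
    (hlf : ∀ v : V, (Γ.neighborSet v).Finite)
    (hstab : ∀ v : V, IsCompact ((stabilizer G v : Subgroup G) : Set G) ∧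
      IsOpen ((stabilizer G v : Subgroup G) : Set G))
    (horb : ∃ s : Set V, s.Finite ∧ ∀ v : V, ∃ g : G, g • v ∈ s) :
    IsCompactlyGeneratedGroup G := by
  obtain ⟨s, hs, hrep⟩ := horb
  obtain ⟨a₀, ha₀⟩ : s.Nonempty :=
    let ⟨v⟩ := hconn.nonempty
    (hrep v).elim fun g hg => ⟨g • v, hg⟩
  obtain ⟨T₁, hT₁, hnbr⟩ :=
    (hs.biUnion fun a _ => hlf a).exists_finite_witnesses fun b _ => hrep b
  obtain ⟨T₂, hT₂, horb⟩ := (hs.inter_of_left (orbit G a₀)).exists_finite_witnesses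
    fun a ha => ha.2
  refine ⟨_, (hstab a₀).1.union (hT₁.union hT₂).isCompact,
    closure_stabilizer_union_eq_top_of_isGraphAction hact hconn ha₀ ?_ ?_⟩
  · intro a ha b hb
    obtain ⟨t, ht, htb⟩ := hnbr b (Set.mem_biUnion ha hb)
    exact ⟨t, Or.inl ht, htb⟩
  · intro a ha hao
    obtain ⟨t, ht, hta⟩ := horb a ⟨ha, hao⟩
    exact ⟨t, Or.inr ht, hta⟩

/-- Kron–Möller: a totally disconnected locally compact group acting on a connected
locally finite graph with compact open vertex stabilizers and finitely many orbits of
vertices is compactly generated. -/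
theorem isCompactlyGenerated_of_action_on_locallyFinite_graph
    {G : Type u} [Group G] [TopologicalSpace G] [IsTopologicalGroup G] [T2Space G]
    [LocallyCompactSpace G] [TotallyDisconnectedSpace G]
    {V : Type v} [MulAction G V] (Γ : SimpleGraph V)
    (hact : IsGraphAction G Γ) (hconn : Γ.Connected)
    (hlf : ∀ v : V, (Γ.neighborSet v).Finite)
    (hstab : ∀ v : V, IsCompact ((stabilizer G v : Subgroup G) : Set G) ∧
      IsOpen ((stabilizer G v : Subgroup G) : Set G))
    (horb : ∃ s : Set V, s.Finite ∧ ∀ v : V, ∃ g : G, g • v ∈ s) :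
    IsCompactlyGeneratedGroup G :=
  isCompactlyGenerated_of_action_on_locallyFinite_graph_general Γ hact hconn hlf hstab horb
end

section
/- Let G be a Hausdorff topological group acting by graph automorphisms on a connected simple graph K such that every vertex stabilizer is open, there are finitely many G-orbits of vertices and finitely many G-orbits of edges, and the pointwise stabilizer of every edge is compact. Then for every vertex v of K incident to at least one edge, v has infinite degree if and only if its stabilizer G_v is not compact. -/
open MulAction

universe u v

section GGraphs

variable (G : Type u) [Group G] [TopologicalSpace G] {V : Type v} [MulAction G V]

/- A compact set meets only finitely many cosets of an open subgroup, so a compact vertex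
stabilizer has finite orbits, and finitely many edge orbits then leave only finitely many
neighbours of `v`. Conversely, `G_v` is covered by finitely many translates of the compact edge
stabilizer `G_v ∩ G_w`, one for each of the finitely many neighbours in the `G_v`-orbit of `w`. -/

section Stabilizers

open scoped Pointwise

variable {G : Type u} [Group G] {V : Type v} [MulAction G V]

theorem subset_orbit_of_prod_mem_orbit {q : V × V} {v x₀ : V} (hx₀ : (v, x₀) ∈ orbit G q) :
    {x | (v, x) ∈ orbit G q} ⊆ (· • x₀) '' (stabilizer G v : Set G) := by
  intro x hx
  obtain ⟨g, hg⟩ : (v, x) ∈ orbit G (v, x₀) := by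
    rw [orbit_eq_iff.mpr hx₀]
    exact hx
  simp only [Prod.smul_mk, Prod.mk.injEq] at hg
  exact ⟨g, hg.1, hg.2⟩

theorem finite_setOf_prod_mem_orbit {v : V}
    (horb : ∀ u : V, ((· • u) '' (stabilizer G v : Set G)).Finite) (q : V × V) :
    {x | (v, x) ∈ orbit G q}.Finite := by
  rcases Set.eq_empty_or_nonempty {x | (v, x) ∈ orbit G q} with hempty | ⟨x₀, hx₀⟩
  · exact hempty ▸ Set.finite_empty
  · exact (horb x₀).subset (subset_orbit_of_prod_mem_orbit hx₀)

variable [TopologicalSpace G] [SeparatelyContinuousMul G]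

theorem IsCompact.finite_image_smul {S : Set G} (hS : IsCompact S) {u : V}
    (hu : IsOpen (stabilizer G u : Set G)) : ((· • u) '' S).Finite := by
  have hcover : S ⊆ ⋃ g : G, g • (stabilizer G u : Set G) := fun g _ =>
    Set.mem_iUnion.2 ⟨g, Set.mem_smul_set.2 ⟨1, (stabilizer G u).one_mem, mul_one g⟩⟩
  obtain ⟨F, hF⟩ := hS.elim_finite_subcover _ (fun g => hu.smul g) hcover
  refine (F.finite_toSet.image (· • u)).subset ?_
  rintro _ ⟨g, hg, rfl⟩
  obtain ⟨g₀, hg₀, hmem⟩ := Set.mem_iUnion₂.1 (hF hg)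
  obtain ⟨h, hh, rfl⟩ := Set.mem_smul_set.1 hmem
  exact ⟨g₀, hg₀, by simp only [smul_eq_mul, mul_smul, mem_stabilizer_iff.1 hh]⟩

theorem isCompact_stabilizer_of_finite_image_smul {v w : V}
    (hclosed : IsClosed (stabilizer G v : Set G))
    (hC : IsCompact ((stabilizer G v ⊓ stabilizer G w : Subgroup G) : Set G))
    (hfin : ((· • w) '' (stabilizer G v : Set G)).Finite) :
    IsCompact (stabilizer G v : Set G) := by
  obtain ⟨F, hFv, hF, hFw⟩ := Set.exists_subset_image_finite_and.1 ⟨_, subset_rfl, hfin, rfl⟩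
  have hcover : (stabilizer G v : Set G) ⊆
      ⋃ g ∈ F, g • ((stabilizer G v ⊓ stabilizer G w : Subgroup G) : Set G) := by
    intro h hh
    obtain ⟨g, hgF, hgw⟩ : h • w ∈ (· • w) '' F := hFw ▸ ⟨h, hh, rfl⟩
    have hg : g ∈ stabilizer G v := hFv hgF
    have hgh : g⁻¹ * h ∈ stabilizer G v ⊓ stabilizer G w :=
      Subgroup.mem_inf.2 ⟨mul_mem (inv_mem hg) hh, by
        rw [mem_stabilizer_iff, mul_smul, inv_smul_eq_iff]
        exact hgw.symm⟩
    exact Set.mem_biUnion hgF (Set.mem_smul_set.2 ⟨g⁻¹ * h, hgh, mul_inv_cancel_left g h⟩)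
  exact (hF.isCompact_biUnion fun g _ => hC.smul g).of_isClosed_subset hclosed hcover

end Stabilizers

section GraphActions

variable {G : Type u} [Group G] {V : Type v} [MulAction G V] {K : SimpleGraph V}

theorem IsGraphAction.image_smul_stabilizer_subset_neighborSet (hact : IsGraphAction G K)
    {v w : V} (hw : K.Adj v w) : (· • w) '' (stabilizer G v : Set G) ⊆ K.neighborSet v := by
  rintro _ ⟨g, hg, rfl⟩
  simpa only [SimpleGraph.mem_neighborSet, mem_stabilizer_iff.1 hg] using hact g v w hw

theorem finite_neighborSet_of_finite_image_smul {t : Set (V × V)} (ht : t.Finite)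
    (hcov : ∀ a b : V, K.Adj a b → ∃ g : G, (g • a, g • b) ∈ t) {v : V}
    (horb : ∀ u : V, ((· • u) '' (stabilizer G v : Set G)).Finite) :
    (K.neighborSet v).Finite := by
  refine (ht.biUnion fun q _ => finite_setOf_prod_mem_orbit horb q).subset fun x hx => ?_
  obtain ⟨g, hg⟩ := hcov v x hx
  exact Set.mem_biUnion hg ⟨g⁻¹, by simp only [Prod.smul_mk, inv_smul_smul]⟩

end GraphActions

theorem infinite_degree_iff_not_isCompact_stabilizer_general
    {G : Type u} [Group G] [TopologicalSpace G] [IsTopologicalGroup G]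
    {V : Type v} [MulAction G V] (K : SimpleGraph V)
    (hact : IsGraphAction G K)
    (hdisc : IsDiscreteAction G K)
    (hcc : IsCocompactAction G K)
    (hedge : HasCompactEdgeStabilizers G K)
    (v : V) (hv : ∃ w : V, K.Adj v w) :
    (K.neighborSet v).Infinite ↔ ¬ IsCompact ((stabilizer G v : Subgroup G) : Set G) := by
  refine not_congr ⟨fun hfin => ?_, fun hcomp => ?_⟩
  · obtain ⟨w, hw⟩ := hv
    exact isCompact_stabilizer_of_finite_image_smul ((stabilizer G v).isClosed_of_isOpen (hdisc v))
      (hedge v w hw) (hfin.subset (hact.image_smul_stabilizer_subset_neighborSet hw))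
  · obtain ⟨-, t, ht, hcov⟩ := hcc
    exact finite_neighborSet_of_finite_image_smul ht hcov fun u => hcomp.finite_image_smul (hdisc u)

/-- For a connected `G`-graph with discrete cocompact action and compact pointwise edge
stabilizers, a vertex incident to an edge has infinite degree iff its stabilizer is not
compact. -/
theorem infinite_degree_iff_not_isCompact_stabilizer
    {G : Type u} [Group G] [TopologicalSpace G] [IsTopologicalGroup G] [T2Space G]
    {V : Type v} [MulAction G V] (K : SimpleGraph V)
    (hact : IsGraphAction G K) (hconn : K.Connected)
    (hdisc : IsDiscreteAction G K)
    (hcc : IsCocompactAction G K)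
    (hedge : HasCompactEdgeStabilizers G K)
    (v : V) (hv : ∃ w : V, K.Adj v w) :
    (K.neighborSet v).Infinite ↔ ¬ IsCompact ((stabilizer G v : Subgroup G) : Set G) :=
  infinite_degree_iff_not_isCompact_stabilizer_general K hact hdisc hcc hedge v hv
end GGraphs
end

section
/- Let G be a Hausdorff topological group acting by graph automorphisms on a connected simple graph Γ such that every vertex stabilizer is open and the pointwise stabilizer of every edge is compact. Let x, y, z be vertices of Γ with x adjacent to y and y adjacent to z, and let u, v be adjacent vertices of Γ. Then the set B = { g·z : g ∈ G, g·x = u, g·y = v } is finite. -/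
open MulAction

universe u v

/-- The orbit map factors through `G ⧸ stabilizer G z`, which is discrete when the stabilizer
is open, so it sends compact sets to finite ones. -/
theorem IsCompact.finite_image_smul_of_isOpen_stabilizer {G X : Type*} [Group G]
    [TopologicalSpace G] [SeparatelyContinuousMul G] [MulAction G X] {K : Set G}
    (hK : IsCompact K) {z : X} (hz : IsOpen (stabilizer G z : Set G)) :
    ((· • z) '' K).Finite := by
  have := QuotientGroup.discreteTopology hz
  have hfin : ((QuotientGroup.mk : G → G ⧸ stabilizer G z) '' K).Finite :=
    (hK.image QuotientGroup.continuous_mk).finite_of_discrete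
  convert hfin.image (fun q => ((orbitEquivQuotientStabilizer G z).symm q : X)) using 1
  rw [Set.image_image]
  rfl

open Pointwise in
theorem finite_translates_of_corner_general
    {G : Type u} [Group G] [TopologicalSpace G] [IsTopologicalGroup G]
    {V : Type v} [MulAction G V] (Γ : SimpleGraph V)
    (hdisc : IsDiscreteAction G Γ)
    (hedge : HasCompactEdgeStabilizers G Γ)
    (x y z u v : V) (hxy : Γ.Adj x y) :
    {w : V | ∃ g : G, g • x = u ∧ g • y = v ∧ g • z = w}.Finite := by
  by_cases hS : ∃ g₀ : G, g₀ • x = u ∧ g₀ • y = v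
  · obtain ⟨g₀, rfl, rfl⟩ := hS
    -- every admissible `g` lies in `g₀ (G_x ∩ G_y)`
    refine (((hedge x y hxy).finite_image_smul_of_isOpen_stabilizer (hdisc z)).smul_set
      (a := g₀)).subset ?_
    rintro _ ⟨g, hgx, hgy, rfl⟩
    have hk : g₀⁻¹ * g ∈ stabilizer G x ⊓ stabilizer G y :=
      Subgroup.mem_inf.2 ⟨by rw [mem_stabilizer_iff, mul_smul, hgx, inv_smul_smul],
        by rw [mem_stabilizer_iff, mul_smul, hgy, inv_smul_smul]⟩
    exact Set.mem_smul_set.2 ⟨_, ⟨_, hk, rfl⟩, by rw [smul_smul, mul_inv_cancel_left]⟩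
  · refine Set.finite_empty.subset ?_
    rintro _ ⟨g, hgx, hgy, -⟩
    exact hS ⟨g, hgx, hgy⟩

/-- For a connected `G`-graph with discrete action and compact pointwise edge stabilizers,
given a 2-path `[x,y,z]` and an edge `{u,v}`, the set `{ g·z : g·x = u, g·y = v }` is
finite. -/
theorem finite_translates_of_corner
    {G : Type u} [Group G] [TopologicalSpace G] [IsTopologicalGroup G] [T2Space G]
    {V : Type v} [MulAction G V] (Γ : SimpleGraph V)
    (hact : IsGraphAction G Γ) (hconn : Γ.Connected)
    (hdisc : IsDiscreteAction G Γ)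
    (hedge : HasCompactEdgeStabilizers G Γ)
    (x y z u v : V) (hxy : Γ.Adj x y) (hyz : Γ.Adj y z) (huv : Γ.Adj u v) :
    {w : V | ∃ g : G, g • x = u ∧ g • y = v ∧ g • z = w}.Finite :=
  finite_translates_of_corner_general Γ hdisc hedge x y z u v hxy
end

section
/- Let (G, ℋ) be a proper pair. Any two Cayley-Abels graphs of G with respect to ℋ are quasi-isometric; moreover, if one Cayley-Abels graph of G with respect to ℋ is fine, then every Cayley-Abels graph of G with respect to ℋ is fine. -/
/-
Proof idea. Fix an orbit transversal of `Γ` and, for every vertex `u` of `Γ` with non-compact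
stabilizer, a vertex `τ u` of `Γ'` with the same stabilizer; it exists because both graphs
realise every member of `ℋ` up to conjugacy. Transporting `τ` along the transversal gives a map
`Γ → Γ'`. Up to translation, adjacent vertices have only finitely many pairs of images (there are
finitely many edge orbits, and compact stabilizers have finite orbits), so the map is coarsely
Lipschitz; composed with the analogous map back it stays a bounded distance from the identity.

Fineness at a vertex with compact stabilizer is automatic: it has finitely many neighbours. A
vertex `v` with non-compact stabilizer goes to a vertex `v*` with the same stabilizer, and by the
last axiom of Cayley-Abels graphs no other vertex with non-compact stabilizer goes to `v*`. A path
of `Γ` avoiding `v` is followed in `Γ'` along translates of finitely many template walks. Each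
time such a translate enters `v*` the translating element is pinned, up to a compact set, by the
template edge it enters along, because edge stabilizers of `Γ'` are compact; in between, fineness
of `Γ'` at `v*` keeps the visited neighbours of `v*` in a finite set. Rounds of these two steps
confine the endpoints of all short paths to finitely many translates of representatives.
-/

open MulAction

universe u v

open Set Pointwise

universe w

theorem stabilizer_prod {G : Type u} [Group G] {α : Type v} [MulAction G α] (a b : α) :
    stabilizer G (a, b) = stabilizer G a ⊓ stabilizer G b := by
  ext g
  simp [mem_stabilizer_iff, Prod.ext_iff]

section CompactSets

variable {G : Type u} [Group G] [TopologicalSpace G] [IsTopologicalGroup G]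
  {α : Type v} [MulAction G α]

theorem finite_image_smul_of_isCompact {K : Set G} (hK : IsCompact K) {a : α}
    (ha : IsOpen (stabilizer G a : Set G)) : ((· • a) '' K).Finite := by
  obtain ⟨t, -, ht, hcover⟩ := hK.elim_finite_subcover_image
    (c := fun g => g • (stabilizer G a : Set G)) (fun g _ => ha.smul g)
    (fun g _ => mem_biUnion ‹g ∈ K› ⟨1, one_mem _, mul_one g⟩)
  refine (ht.image (· • a)).subset ?_
  rintro _ ⟨g, hg, rfl⟩
  obtain ⟨h, hh, s, hs, rfl⟩ := mem_mul.mp (by simpa using hcover hg)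
  exact ⟨h, hh, by simp only [mul_smul, mem_stabilizer_iff.mp hs]⟩

theorem finite_inv_smul_of_isCompact {K : Set G} (hK : IsCompact K) {s : Set α} (hs : s.Finite)
    (hopen : ∀ a : α, IsOpen (stabilizer G a : Set G)) :
    {b : α | ∃ g ∈ K, ∃ a ∈ s, b = g⁻¹ • a}.Finite := by
  refine (hs.biUnion fun a _ => finite_image_smul_of_isCompact hK.inv (hopen a)).subset ?_
  rintro _ ⟨g, hg, a, ha, rfl⟩
  exact mem_biUnion ha ⟨g⁻¹, by simpa using hg, rfl⟩

theorem isCompact_setOf_smul_eq {a : α} (ha : IsCompact (stabilizer G a : Set G)) (b : α) :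
    IsCompact {g : G | g • a = b} := by
  rcases eq_empty_or_nonempty {g : G | g • a = b} with h | ⟨g₀, hg₀⟩
  · simp [h]
  convert ha.image (continuous_const_mul g₀) using 1
  ext g
  refine ⟨fun hg => ⟨g₀⁻¹ * g, ?_, mul_inv_cancel_left g₀ g⟩, ?_⟩
  · rw [SetLike.mem_coe, mem_stabilizer_iff, mul_smul, hg, ← hg₀, inv_smul_smul]
  · rintro ⟨s, hs, rfl⟩
    show (g₀ * s) • a = b
    rw [mul_smul, mem_stabilizer_iff.mp hs, hg₀]

theorem isCompact_stabilizer_smul_iff (g : G) (a : α) :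
    IsCompact (stabilizer G (g • a) : Set G) ↔ IsCompact (stabilizer G a : Set G) := by
  have hconj : (stabilizer G (g • a) : Set G) =
      (Homeomorph.mulLeft g).trans (Homeomorph.mulRight g⁻¹) '' stabilizer G a := by
    ext h
    simp [stabilizer_smul_eq_stabilizer_map_conj, MulAut.conj_apply]
  rw [hconj, Homeomorph.isCompact_image]

end CompactSets

namespace SimpleGraph

variable {V : Type v} {V' : Type w} {Γ : SimpleGraph V} {Γ' : SimpleGraph V'}

theorem Connected.dist_le_mul_dist (hΓ : Γ.Connected) (hΓ' : Γ'.Connected) {f : V → V'}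
    {Λ : ℕ} (hf : ∀ a b, Γ.Adj a b → Γ'.dist (f a) (f b) ≤ Λ) (a b : V) :
    Γ'.dist (f a) (f b) ≤ Λ * Γ.dist a b := by
  obtain ⟨p, hp⟩ := hΓ.exists_walk_length_eq_dist a b
  rw [← hp]
  clear hp
  induction p with
  | nil => simp
  | @cons a c b h q ih =>
    calc Γ'.dist (f a) (f b) ≤ Γ'.dist (f a) (f c) + Γ'.dist (f c) (f b) := hΓ'.dist_triangle
      _ ≤ Λ + Λ * q.length := add_le_add (hf _ _ h) ih
      _ = Λ * (Walk.cons h q).length := by rw [Walk.length_cons]; ring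

theorem quasiIsometricGraphs_of_coarseInverse (hΓ : Γ.Connected)
    {f : V → V'} {F : V' → V} {Λ Λ' D D' : ℕ}
    (hf : ∀ a b, Γ'.dist (f a) (f b) ≤ Λ * Γ.dist a b)
    (hF : ∀ a b, Γ.dist (F a) (F b) ≤ Λ' * Γ'.dist a b)
    (hFf : ∀ a, Γ.dist a (F (f a)) ≤ D) (hfF : ∀ a, Γ'.dist a (f (F a)) ≤ D') :
    QuasiIsometricGraphs Γ Γ' := by
  have hlower : ∀ a b, Γ.dist a b ≤ Λ' * Γ'.dist (f a) (f b) + 2 * D := fun a b =>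
    calc Γ.dist a b
        ≤ Γ.dist a (F (f a)) + (Γ.dist (F (f a)) (F (f b)) + Γ.dist (F (f b)) b) :=
          hΓ.dist_triangle.trans (add_le_add le_rfl hΓ.dist_triangle)
      _ ≤ D + (Λ' * Γ'.dist (f a) (f b) + D) :=
          add_le_add (hFf a) (add_le_add (hF _ _) (dist_comm.trans_le (hFf b)))
      _ = Λ' * Γ'.dist (f a) (f b) + 2 * D := by ring
  set L : ℝ := max (max Λ Λ') 1
  have hL : (1 : ℝ) ≤ L := le_max_right _ _
  have hΛ : (Λ : ℝ) ≤ L := (le_max_left _ _).trans (le_max_left _ _)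
  have hΛ' : (Λ' : ℝ) ≤ L := (le_max_right _ _).trans (le_max_left _ _)
  refine ⟨f, L, 2 * D + D', hL, by positivity, fun a b => ⟨?_, ?_⟩, fun a => ⟨F a, ?_⟩⟩
  · have h := hlower a b
    rw [sub_le_iff_le_add, inv_mul_le_iff₀ (by positivity)]
    calc (Γ.dist a b : ℝ) ≤ Λ' * Γ'.dist (f a) (f b) + 2 * D := by exact_mod_cast h
      _ ≤ L * (Γ'.dist (f a) (f b) + (2 * D + D')) := by
        nlinarith [(Nat.cast_nonneg (Γ'.dist (f a) (f b)) : (0 : ℝ) ≤ _),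
          (Nat.cast_nonneg D : (0 : ℝ) ≤ _), (Nat.cast_nonneg D' : (0 : ℝ) ≤ _)]
  · have h := hf a b
    calc (Γ'.dist (f a) (f b) : ℝ) ≤ Λ * Γ.dist a b := by exact_mod_cast h
      _ ≤ L * Γ.dist a b + (2 * D + D') := by
        nlinarith [(Nat.cast_nonneg (Γ.dist a b) : (0 : ℝ) ≤ _),
          (Nat.cast_nonneg D : (0 : ℝ) ≤ _), (Nat.cast_nonneg D' : (0 : ℝ) ≤ _)]
  · have h : (Γ'.dist a (f (F a)) : ℝ) ≤ D' := by exact_mod_cast hfF a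
    linarith [(Nat.cast_nonneg D : (0 : ℝ) ≤ _)]

end SimpleGraph

section GraphActions

variable {G : Type u} [Group G] {V : Type v} [MulAction G V] {Γ : SimpleGraph V}

theorem IsGraphAction.dist_smul (hΓ : IsGraphAction G Γ) (hconn : Γ.Connected) (g : G)
    (a b : V) : Γ.dist (g • a) (g • b) = Γ.dist a b := by
  have hle : ∀ (g : G) (a b : V), Γ.dist (g • a) (g • b) ≤ Γ.dist a b := fun g a b => by
    simpa using hconn.dist_le_mul_dist hconn (f := (g • ·)) (Λ := 1)
      (fun a b h => (SimpleGraph.dist_eq_one_iff_adj.mpr (hΓ g a b h)).le) a b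
  refine (hle g a b).antisymm ?_
  simpa using hle g⁻¹ (g • a) (g • b)

theorem neighborSet_finite_of_isCompact_stabilizer [TopologicalSpace G] [IsTopologicalGroup G]
    (hdisc : IsDiscreteAction G Γ) (hcoc : IsCocompactAction G Γ) {v : V}
    (hv : IsCompact (stabilizer G v : Set G)) : (Γ.neighborSet v).Finite := by
  obtain ⟨-, t, ht, hedges⟩ := hcoc
  refine (ht.biUnion fun p _ => finite_image_smul_of_isCompact
    (isCompact_setOf_smul_eq hv p.1).inv (hdisc p.2)).subset fun y hy => ?_
  obtain ⟨g, hg⟩ := hedges v y hy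
  exact mem_biUnion hg ⟨g⁻¹, by simp, by simp⟩

end GraphActions

structure OrbitTransversal (G : Type u) [Group G] {V : Type v} [MulAction G V]
    (Γ : SimpleGraph V) where
  vertReps : Set V
  edgeReps : Set (V × V)
  vertReps_finite : vertReps.Finite
  edgeReps_finite : edgeReps.Finite
  rep : V → V
  toRep : V → G
  edgeToRep : V → V → G
  rep_mem : ∀ z, rep z ∈ vertReps
  toRep_smul : ∀ z, toRep z • z = rep z
  rep_smul : ∀ (g : G) z, rep (g • z) = rep z
  edgeToRep_smul : ∀ a b, Γ.Adj a b → edgeToRep a b • a = rep a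
  mem_edgeReps : ∀ a b, Γ.Adj a b → (rep a, edgeToRep a b • b) ∈ edgeReps

namespace OrbitTransversal

variable {G : Type u} [Group G] {V : Type v} [MulAction G V] {Γ : SimpleGraph V}

theorem _root_.IsCocompactAction.nonempty_orbitTransversal (h : IsCocompactAction G Γ) :
    Nonempty (OrbitTransversal G Γ) := by
  classical
  obtain ⟨⟨s, hs, hvert⟩, ⟨t, ht, hedge⟩⟩ := h
  have hmeet : ∀ z : V, ∃ u, u ∈ s ∧ u ∈ orbit G z := fun z => by
    obtain ⟨g, hg⟩ := hvert z
    exact ⟨g • z, hg, g, rfl⟩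
  let pick : {O : Set V // ∃ u, u ∈ s ∧ u ∈ O} → V := fun O => O.2.choose
  let rep : V → V := fun z => pick ⟨orbit G z, hmeet z⟩
  have hrep : ∀ z, rep z ∈ s ∧ rep z ∈ orbit G z := fun z => (hmeet z).choose_spec
  have hrep_smul : ∀ (g : G) z, rep (g • z) = rep z := fun g z =>
    congrArg pick (Subtype.ext (orbit_smul g z))
  choose toRep htoRep using fun z => mem_orbit_iff.mp (hrep z).2
  choose e he using hedge
  let edgeToRep : V → V → G := fun a b =>
    if h : Γ.Adj a b then toRep (e a b h • a) * e a b h else 1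
  have hedgeToRep : ∀ a b (h : Γ.Adj a b), edgeToRep a b = toRep (e a b h • a) * e a b h :=
    fun a b h => dif_pos h
  refine ⟨⟨s, (fun p => (rep p.1, toRep p.1 • p.2)) '' t, hs, ht.image _, rep, toRep,
    edgeToRep, fun z => (hrep z).1, htoRep, hrep_smul, fun a b h => ?_, fun a b h => ?_⟩⟩
  · rw [hedgeToRep a b h, mul_smul, htoRep, hrep_smul]
  · exact ⟨_, he a b h, by simp only [hrep_smul, hedgeToRep a b h, mul_smul]⟩

variable (P : OrbitTransversal G Γ)

theorem inv_toRep_smul_rep (z : V) : (P.toRep z)⁻¹ • P.rep z = z := by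
  rw [← P.toRep_smul, inv_smul_smul]

theorem edgeToRep_mul_inv_toRep_mem {a b : V} (h : Γ.Adj a b) :
    P.edgeToRep a b * (P.toRep a)⁻¹ ∈ stabilizer G (P.rep a) := by
  rw [mem_stabilizer_iff, mul_smul, inv_toRep_smul_rep, P.edgeToRep_smul a b h]

theorem toRep_mul_edgeToRep_mul_inv_toRep_mem (a b : V) :
    P.toRep (P.edgeToRep a b • b) * P.edgeToRep a b * (P.toRep b)⁻¹ ∈
      stabilizer G (P.rep b) := by
  rw [mem_stabilizer_iff, mul_smul, mul_smul, inv_toRep_smul_rep, P.toRep_smul, P.rep_smul]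

end OrbitTransversal

section Comparison

variable {G : Type u} [Group G] {V : Type v} {V' : Type w} [MulAction G V] [MulAction G V']
  {Γ : SimpleGraph V} {Γ' : SimpleGraph V'}

def comparisonMap (P : OrbitTransversal G Γ) (τ : V → V') (z : V) : V' :=
  (P.toRep z)⁻¹ • τ (P.rep z)

variable (G) in
def anchorOrbit (τ : V → V') (u : V) : Set V' := (· • τ u) '' (stabilizer G u : Set G)

def templateEnds (P : OrbitTransversal G Γ) (τ : V → V') : Set (V' × V') :=
  ⋃ q ∈ P.edgeReps,
    anchorOrbit G τ q.1 ×ˢ ((P.toRep q.2)⁻¹ • anchorOrbit G τ (P.rep q.2))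

theorem edgeToRep_smul_mem_templateEnds (P : OrbitTransversal G Γ) (τ : V → V') {a b : V}
    (h : Γ.Adj a b) :
    (P.edgeToRep a b • comparisonMap P τ a, P.edgeToRep a b • comparisonMap P τ b) ∈
      templateEnds P τ := by
  refine mem_biUnion (P.mem_edgeReps a b h) ⟨⟨_, P.edgeToRep_mul_inv_toRep_mem h, ?_⟩, ?_⟩
  · simp only [comparisonMap, mul_smul]
  · rw [mem_smul_set, P.rep_smul]
    refine ⟨_, ⟨_, P.toRep_mul_edgeToRep_mul_inv_toRep_mem a b, rfl⟩, ?_⟩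
    simp only [comparisonMap, mul_smul, inv_smul_smul]

noncomputable def templateWalk (hconn' : Γ'.Connected) (b c : V') : Γ'.Walk b c :=
  (hconn'.preconnected b c).some

theorem dist_comparisonMap_le (P : OrbitTransversal G Γ) {τ : V → V'}
    (hga' : IsGraphAction G Γ') (hconn' : Γ'.Connected) {lam : ℕ}
    (hlam : ∀ p ∈ templateEnds P τ, (templateWalk hconn' p.1 p.2).length ≤ lam) {a b : V}
    (h : Γ.Adj a b) : Γ'.dist (comparisonMap P τ a) (comparisonMap P τ b) ≤ lam := by
  rw [← hga'.dist_smul hconn' (P.edgeToRep a b)]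
  exact (SimpleGraph.dist_le _).trans (hlam _ (edgeToRep_smul_mem_templateEnds P τ h))

variable [TopologicalSpace G]

variable (G) in
def IsAnchor (τ : V → V') : Prop :=
  ∀ u, ¬ IsCompact (stabilizer G u : Set G) → stabilizer G (τ u) = stabilizer G u

theorem IsCayleyAbelsGraph.exists_isAnchor {ℋ : Finset (Subgroup G)}
    (h : IsCayleyAbelsGraph G ℋ Γ) (h' : IsCayleyAbelsGraph G ℋ Γ') :
    ∃ τ : V → V', IsAnchor G τ := by
  obtain ⟨-, -, -, -, -, hconj, -, -⟩ := h
  obtain ⟨-, hconn', -, -, -, -, hreal', -⟩ := h'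
  have : ∀ u : V, ∃ u' : V', ¬ IsCompact (stabilizer G u : Set G) →
      stabilizer G u' = stabilizer G u := fun u => by
    rcases hconj u with hu | ⟨H, hH, g, hg⟩
    · exact ⟨hconn'.nonempty.some, fun hu' => absurd hu hu'⟩
    · obtain ⟨w, hw⟩ := hreal' H hH
      exact ⟨g • w, fun _ => by
        rw [stabilizer_smul_eq_stabilizer_map_conj, hw, hg, conjSubgroup]⟩
  choose τ hτ using this
  exact ⟨τ, hτ⟩

variable [IsTopologicalGroup G]

theorem anchorOrbit_finite {τ : V → V'} (hτ : IsAnchor G τ)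
    (hdisc' : IsDiscreteAction G Γ') (u : V) : (anchorOrbit G τ u).Finite := by
  by_cases hu : IsCompact (stabilizer G u : Set G)
  · exact finite_image_smul_of_isCompact hu (hdisc' _)
  · refine (finite_singleton (τ u)).subset ?_
    rintro _ ⟨g, hg, rfl⟩
    rw [← hτ u hu] at hg
    exact mem_stabilizer_iff.mp hg

theorem templateEnds_finite (P : OrbitTransversal G Γ) {τ : V → V'}
    (hτ : IsAnchor G τ) (hdisc' : IsDiscreteAction G Γ') : (templateEnds P τ).Finite :=
  P.edgeReps_finite.biUnion fun _ _ =>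
    (anchorOrbit_finite hτ hdisc' _).prod ((anchorOrbit_finite hτ hdisc' _).smul_set)

theorem exists_templateWalk_length_le (P : OrbitTransversal G Γ)
    {τ : V → V'} (hτ : IsAnchor G τ) (hdisc' : IsDiscreteAction G Γ')
    (hconn' : Γ'.Connected) :
    ∃ lam : ℕ, ∀ p ∈ templateEnds P τ, (templateWalk hconn' p.1 p.2).length ≤ lam := by
  obtain ⟨lam, hlam⟩ := ((templateEnds_finite P hτ hdisc').image
    fun p : V' × V' => (templateWalk hconn' p.1 p.2).length).bddAbove
  exact ⟨lam, fun p hp => hlam (mem_image_of_mem _ hp)⟩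

theorem finite_inv_smul_of_smul_eq {a c : V'} {b : V}
    (hb : IsOpen (stabilizer G b : Set G))
    (hcb : ¬ IsCompact (stabilizer G c : Set G) → stabilizer G c ≤ stabilizer G b) :
    {y | ∃ m : G, m • a = c ∧ y = m⁻¹ • b}.Finite := by
  rcases eq_empty_or_nonempty {m : G | m • a = c} with hempty | ⟨m₀, hm₀⟩
  · refine finite_empty.subset ?_
    rintro _ ⟨m, hm, -⟩
    exact hempty.subset hm
  by_cases ha : IsCompact (stabilizer G a : Set G)
  · refine (finite_image_smul_of_isCompact (isCompact_setOf_smul_eq ha c).inv hb).subset ?_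
    rintro _ ⟨m, hm, rfl⟩
    exact ⟨m⁻¹, by simpa using hm, rfl⟩
  · replace hm₀ : m₀ • a = c := hm₀
    have hc : ¬ IsCompact (stabilizer G c : Set G) := by
      rwa [← hm₀, isCompact_stabilizer_smul_iff]
    refine (finite_singleton (m₀⁻¹ • b)).subset ?_
    rintro _ ⟨m, hm, rfl⟩
    have hfix : m * m₀⁻¹ ∈ stabilizer G b := hcb hc (by
      rw [mem_stabilizer_iff, mul_smul, ← hm₀, inv_smul_smul, hm, hm₀])
    calc m⁻¹ • b = m⁻¹ • (m * m₀⁻¹) • b := by rw [mem_stabilizer_iff.mp hfix]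
      _ = m₀⁻¹ • b := by rw [smul_smul, inv_mul_cancel_left]

theorem exists_dist_comparisonMap_comparisonMap_le (P : OrbitTransversal G Γ)
    (P' : OrbitTransversal G Γ') (τ : V → V') {τ' : V' → V}
    (hτ' : IsAnchor G τ') (hga : IsGraphAction G Γ) (hconn : Γ.Connected)
    (hdisc : IsDiscreteAction G Γ) :
    ∃ D : ℕ, ∀ z, Γ.dist z (comparisonMap P' τ' (comparisonMap P τ z)) ≤ D := by
  let pairs : Set (V × V) := ⋃ u ∈ P.vertReps, ⋃ u' ∈ P'.vertReps,
    {u} ×ˢ {y | ∃ m : G, m • τ u = u' ∧ y = m⁻¹ • τ' u'}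
  have hpairs : pairs.Finite := P.vertReps_finite.biUnion fun u _ =>
    P'.vertReps_finite.biUnion fun u' _ => (finite_singleton u).prod
      (finite_inv_smul_of_smul_eq (hdisc _) fun hu' => (hτ' u' hu').ge)
  obtain ⟨D, hD⟩ := (hpairs.image fun p => Γ.dist p.1 p.2).bddAbove
  refine ⟨D, fun z => ?_⟩
  set w := comparisonMap P τ z
  -- Translating by `toRep z` reduces the distance to one between the coordinates of a pair in
  -- `pairs`.
  set m := P'.toRep w * (P.toRep z)⁻¹
  have hm : m • τ (P.rep z) = P'.rep w := by rw [mul_smul, ← P'.toRep_smul]; rfl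
  have hpair : (P.rep z, m⁻¹ • τ' (P'.rep w)) ∈ pairs :=
    mem_biUnion (P.rep_mem z) (mem_biUnion (P'.rep_mem w) ⟨rfl, m, hm, rfl⟩)
  calc Γ.dist z (comparisonMap P' τ' w)
        = Γ.dist ((P.toRep z)⁻¹ • P.rep z) ((P.toRep z)⁻¹ • (m⁻¹ • τ' (P'.rep w))) := by
        rw [P.inv_toRep_smul_rep, comparisonMap, smul_smul]
        simp only [m]
        group
    _ = Γ.dist (P.rep z) (m⁻¹ • τ' (P'.rep w)) := hga.dist_smul hconn _ _ _
    _ ≤ D := hD (mem_image_of_mem _ hpair)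

theorem IsCayleyAbelsGraph.quasiIsometricGraphs {ℋ : Finset (Subgroup G)}
    (h : IsCayleyAbelsGraph G ℋ Γ) (h' : IsCayleyAbelsGraph G ℋ Γ') :
    QuasiIsometricGraphs Γ Γ' := by
  obtain ⟨τ, hτ⟩ := h.exists_isAnchor h'
  obtain ⟨τ', hτ'⟩ := h'.exists_isAnchor h
  obtain ⟨hga, hconn, hdisc, hcoc, -⟩ := h
  obtain ⟨hga', hconn', hdisc', hcoc', -⟩ := h'
  obtain ⟨P⟩ := hcoc.nonempty_orbitTransversal
  obtain ⟨P'⟩ := hcoc'.nonempty_orbitTransversal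
  obtain ⟨lam, hlam⟩ := exists_templateWalk_length_le P hτ hdisc' hconn'
  obtain ⟨lam', hlam'⟩ := exists_templateWalk_length_le P' hτ' hdisc hconn
  obtain ⟨D, hD⟩ := exists_dist_comparisonMap_comparisonMap_le P P' τ hτ' hga hconn hdisc
  obtain ⟨D', hD'⟩ := exists_dist_comparisonMap_comparisonMap_le P' P τ' hτ hga' hconn' hdisc'
  exact SimpleGraph.quasiIsometricGraphs_of_coarseInverse hconn
    (hconn.dist_le_mul_dist hconn' fun _ _ => dist_comparisonMap_le P hga' hconn' hlam)
    (hconn'.dist_le_mul_dist hconn fun _ _ => dist_comparisonMap_le P' hga hconn hlam') hD hD'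

end Comparison

section NoncompactVertices

variable {G : Type u} [Group G] [TopologicalSpace G] [IsTopologicalGroup G] {V : Type v}
  {V' : Type w} [MulAction G V] [MulAction G V'] {Γ : SimpleGraph V}

theorem stabilizer_comparisonMap (P : OrbitTransversal G Γ) {τ : V → V'} (hτ : IsAnchor G τ)
    {z : V} (hz : ¬ IsCompact (stabilizer G z : Set G)) :
    stabilizer G (comparisonMap P τ z) = stabilizer G z := by
  have hrep : ¬ IsCompact (stabilizer G (P.rep z) : Set G) := by
    rwa [← P.toRep_smul, isCompact_stabilizer_smul_iff]
  rw [comparisonMap, stabilizer_smul_eq_stabilizer_map_conj, hτ _ hrep,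
    ← stabilizer_smul_eq_stabilizer_map_conj, P.inv_toRep_smul_rep]

theorem IsCayleyAbelsGraph.exists_smul_eq_of_stabilizer_eq {ℋ : Finset (Subgroup G)}
    (h : IsCayleyAbelsGraph G ℋ Γ) {z w : V} (hw : ¬ IsCompact (stabilizer G w : Set G))
    (hzw : stabilizer G z = stabilizer G w) : ∃ g : G, g • z = w := by
  obtain ⟨-, -, -, -, -, hconj, -, horbit⟩ := h
  obtain hw' | ⟨H, hH, γ, hγ⟩ := hconj w
  · exact absurd hw' hw
  have hstab : ∀ y : V, stabilizer G y = stabilizer G w → stabilizer G (γ⁻¹ • y) = H :=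
    fun y hy => by
      ext g
      simp [stabilizer_smul_eq_stabilizer_map_conj, hy, hγ, conjSubgroup, Subgroup.mem_map,
        mul_assoc]
  have hH' : ¬ IsCompact (H : Set G) := by
    rwa [← hstab w rfl, isCompact_stabilizer_smul_iff]
  obtain ⟨g, hg⟩ := horbit H hH hH' _ _ (hstab z hzw) (hstab w rfl)
  exact ⟨γ * g * γ⁻¹, by rw [mul_smul, mul_smul, hg, smul_inv_smul]⟩

theorem IsCayleyAbelsGraph.eq_of_comparisonMap_eq {ℋ : Finset (Subgroup G)}
    (h : IsCayleyAbelsGraph G ℋ Γ) (P : OrbitTransversal G Γ) {τ : V → V'}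
    (hτ : IsAnchor G τ) {z w : V} (hz : ¬ IsCompact (stabilizer G z : Set G))
    (hw : ¬ IsCompact (stabilizer G w : Set G))
    (hzw : comparisonMap P τ z = comparisonMap P τ w) :
    z = w := by
  obtain ⟨g, hg⟩ := h.exists_smul_eq_of_stabilizer_eq hw (by
    rw [← stabilizer_comparisonMap P hτ hz, hzw, stabilizer_comparisonMap P hτ hw])
  have hrep : P.rep z = P.rep w := by rw [← hg, P.rep_smul]
  have hrep' : ¬ IsCompact (stabilizer G (P.rep w) : Set G) := by
    rwa [← P.toRep_smul, isCompact_stabilizer_smul_iff]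
  have hfix : P.toRep w * (P.toRep z)⁻¹ ∈ stabilizer G (P.rep w) := by
    rw [← hτ _ hrep', mem_stabilizer_iff, mul_smul, ← hrep]
    exact (congrArg (P.toRep w • ·) hzw).trans (by rw [comparisonMap, smul_inv_smul, hrep])
  apply MulAction.injective (P.toRep w)
  calc P.toRep w • z = (P.toRep w * (P.toRep z)⁻¹) • P.rep w := by
        rw [mul_smul, ← hrep, P.inv_toRep_smul_rep]
    _ = P.toRep w • w := by rw [mem_stabilizer_iff.mp hfix, P.toRep_smul]

end NoncompactVertices

structure FinenessTransfer (G : Type u) [Group G] [TopologicalSpace G] {V : Type v}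
    {V' : Type w} [MulAction G V] [MulAction G V'] (Γ : SimpleGraph V) (Γ' : SimpleGraph V') where
  P : OrbitTransversal G Γ
  τ : V → V'
  v : V
  x : V
  n : ℕ
  lam : ℕ
  isAnchor : IsAnchor G τ
  isGraphAction' : IsGraphAction G Γ'
  isDiscreteAction : IsDiscreteAction G Γ
  isDiscreteAction' : IsDiscreteAction G Γ'
  hasCompactEdgeStabilizers' : HasCompactEdgeStabilizers G Γ'
  connected' : Γ'.Connected
  adj_v_x : Γ.Adj v x
  eq_v_of_comparisonMap_eq : ∀ z, comparisonMap P τ z = comparisonMap P τ v →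
    ¬ IsCompact (stabilizer G z : Set G) → z = v
  fineAt : Γ'.FineAt (comparisonMap P τ v)
  length_templateWalk_le :
    ∀ p ∈ templateEnds P τ, (templateWalk connected' p.1 p.2).length ≤ lam

namespace FinenessTransfer

variable {G : Type u} [Group G] [TopologicalSpace G] {V : Type v} {V' : Type w} [MulAction G V]
  [MulAction G V'] {Γ : SimpleGraph V} {Γ' : SimpleGraph V'} (D : FinenessTransfer G Γ Γ')

def φ (z : V) : V' := comparisonMap D.P D.τ z

def hub : V' := D.φ D.v

def templateDarts : Set (V' × V') :=
  ⋃ p ∈ templateEnds D.P D.τ,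
    (fun d : Γ'.Dart => (d.fst, d.snd)) '' {d | d ∈ (templateWalk D.connected' p.1 p.2).darts}

theorem templateDarts_finite [IsTopologicalGroup G] : D.templateDarts.Finite :=
  (templateEnds_finite D.P D.isAnchor D.isDiscreteAction').biUnion fun _ _ =>
    (List.finite_toSet _).image _

/-- The correction factors between the translating elements of consecutive edges of a path of `Γ`
at a vertex other than `v` that is sent to the hub. -/
def gens : Set G :=
  insert 1 ((⋃ u ∈ {u ∈ D.P.vertReps | IsCompact (stabilizer G u : Set G)},
    (stabilizer G u : Set G)) ∪ (fun q => D.P.toRep q.2) '' D.P.edgeReps)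

theorem isCompact_gens : IsCompact D.gens :=
  ((D.P.vertReps_finite.subset (sep_subset _ _)).isCompact_biUnion fun _ hu => hu.2).union
    (D.P.edgeReps_finite.image _).isCompact |>.insert 1

theorem mem_gens_of_mem_stabilizer {u : V} (hu : u ∈ D.P.vertReps)
    (hc : IsCompact (stabilizer G u : Set G)) {g : G} (hg : g ∈ stabilizer G u) : g ∈ D.gens :=
  mem_insert_of_mem _ (Or.inl (mem_biUnion ⟨hu, hc⟩ hg))

theorem toRep_mem_gens {q : V × V} (hq : q ∈ D.P.edgeReps) : D.P.toRep q.2 ∈ D.gens :=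
  mem_insert_of_mem _ (Or.inr (mem_image_of_mem _ hq))

def smear (j : ℕ) : Set G := D.gens ^ j

theorem isCompact_smear [IsTopologicalGroup G] (j : ℕ) : IsCompact (D.smear j) := by
  induction j with
  | zero => simp [smear]
  | succ j ih => simpa [smear, pow_succ] using ih.mul D.isCompact_gens

theorem smear_mono {j j' : ℕ} (h : j ≤ j') : D.smear j ⊆ D.smear j' :=
  pow_subset_pow_right (mem_insert 1 _) h

theorem mul_mem_smear_mul {S : Set G} {f g : G} (hf : f ∈ D.gens) {j : ℕ}
    (hg : g ∈ D.smear j * S) : f * g ∈ D.smear (j + 1) * S := by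
  obtain ⟨m, hm, s, hs, rfl⟩ := hg
  exact ⟨f * m, by rw [smear, pow_succ']; exact mul_mem_mul hf hm, s, hs, mul_assoc _ _ _⟩

def start : G := D.P.edgeToRep D.v D.x

def pinned (E : Set V') : Set G :=
  insert D.start (⋃ e ∈ E, ⋃ t ∈ D.templateDarts, {g | g • (e, D.hub) = t})

theorem isCompact_pinned [IsTopologicalGroup G] {E : Set V'} (hE : E.Finite)
    (hEhub : E ⊆ Γ'.neighborSet D.hub) :
    IsCompact (D.pinned E) := by
  refine (hE.isCompact_biUnion fun e he => D.templateDarts_finite.isCompact_biUnion fun t _ =>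
    isCompact_setOf_smul_eq ?_ t).insert _
  rw [stabilizer_prod, inf_comm]
  exact D.hasCompactEdgeStabilizers' _ _ (hEhub he)

theorem pinned_mono {E E' : Set V'} (h : E ⊆ E') : D.pinned E ⊆ D.pinned E' :=
  insert_subset_insert (biUnion_subset_biUnion_left h)

-- A path of length at most `n` from `x`, preceded by the edge `v x` and followed by an edge back
-- to `v`, crosses at most `n + 2` template walks, and each of its edges contributes at most
-- three factors from `gens`.
def budget : ℕ := (D.n + 2) * D.lam

def maxSmear : ℕ := 3 * D.n + 3

def reachStep (E : Set V') : Set V' :=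
  {y ∈ Γ'.neighborSet D.hub |
    (∃ e ∈ E, ∃ p : (Γ'.deleteVertex D.hub).Walk e y, p.length ≤ D.budget) ∨
      ∃ g ∈ D.smear D.maxSmear * D.pinned E, ∃ t ∈ D.templateDarts, y = g⁻¹ • t.2}

def reach (k : ℕ) : Set V' := D.reachStep^[k] ∅

theorem reach_succ (k : ℕ) : D.reach (k + 1) = D.reachStep (D.reach k) :=
  Function.iterate_succ_apply' _ _ _

theorem reach_subset_neighborSet (k : ℕ) : D.reach k ⊆ Γ'.neighborSet D.hub := by
  cases k with
  | zero => exact empty_subset _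
  | succ k => rw [reach_succ]; exact sep_subset _ _

theorem reach_finite [IsTopologicalGroup G] (k : ℕ) : (D.reach k).Finite := by
  induction k with
  | zero => exact finite_empty
  | succ k ih =>
    rw [reach_succ]
    refine ((ih.biUnion fun e he => D.fineAt e (D.reach_subset_neighborSet k he) D.budget).union
      (finite_inv_smul_of_isCompact ((D.isCompact_smear D.maxSmear).mul (D.isCompact_pinned ih
        (D.reach_subset_neighborSet k))) (D.templateDarts_finite.image Prod.snd)
        D.isDiscreteAction')).subset ?_
    rintro y ⟨hy, ⟨e, he, p, hp⟩ | ⟨g, hg, t, ht, rfl⟩⟩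
    · exact Or.inl (mem_biUnion he ⟨hy, p, hp⟩)
    · exact Or.inr ⟨g, hg, t.2, mem_image_of_mem _ ht, rfl⟩

theorem reach_mono : Monotone D.reach :=
  monotone_nat_of_le_succ fun k y hy => by
    rw [reach_succ]
    exact ⟨D.reach_subset_neighborSet k hy, Or.inl ⟨y, hy, .nil, Nat.zero_le _⟩⟩

def Reached (k : ℕ) (a : V') : Prop :=
  a ≠ D.hub ∧ ∃ e ∈ D.reach k, ∃ p : (Γ'.deleteVertex D.hub).Walk e a, p.length ≤ k

/-- The invariant maintained while following the translate by `g⁻¹` of a template walk through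
`b`. -/
def Tracks (k j : ℕ) (g : G) (b : V') : Prop :=
  D.Reached k (g⁻¹ • b) ∨ (g⁻¹ • b = D.hub ∧ g ∈ D.smear j * D.pinned (D.reach k))

def TracksVertex (k j : ℕ) (z : V) : Prop := D.Tracks k j (D.P.toRep z) (D.τ (D.P.rep z))

variable {D} in
theorem Tracks.mono {k k' j j' : ℕ} {g : G} {b : V'} (h : D.Tracks k j g b) (hk : k ≤ k')
    (hj : j ≤ j') : D.Tracks k' j' g b := by
  rcases h with ⟨hne, e, he, p, hp⟩ | ⟨hhub, hg⟩
  · exact Or.inl ⟨hne, e, D.reach_mono hk he, p, hp.trans hk⟩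
  · exact Or.inr ⟨hhub, mul_subset_mul (D.smear_mono hj) (D.pinned_mono (D.reach_mono hk)) hg⟩

variable {D} in
theorem Tracks.mem_of_eq_hub {k j : ℕ} {g : G} {b : V'} (h : D.Tracks k j g b)
    (hb : g⁻¹ • b = D.hub) : g ∈ D.smear j * D.pinned (D.reach k) :=
  h.elim (fun hr => absurd hb hr.1) And.right

theorem tracks_of_walk {b c : V'} (W : Γ'.Walk b c)
    (hW : ∀ d ∈ W.darts, (d.fst, d.snd) ∈ D.templateDarts) {g : G} {j : ℕ}
    (hj : j ≤ D.maxSmear) {k : ℕ} (hk : k + W.length ≤ D.budget) (h : D.Tracks k j g b) :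
    D.Tracks (k + W.length) j g c := by
  induction W generalizing k with
  | nil => simpa using h
  | @cons b b₂ c hadj W ih =>
    rw [SimpleGraph.Walk.length_cons] at hk ⊢
    rw [show k + (W.length + 1) = k + 1 + W.length by omega]
    refine ih (fun d hd => hW d (by simp [hd])) (k := k + 1) (by omega) ?_
    have hdart : (b, b₂) ∈ D.templateDarts := hW ⟨(b, b₂), hadj⟩ (by simp)
    have hadj' : Γ'.Adj (g⁻¹ • b) (g⁻¹ • b₂) := D.isGraphAction' _ _ _ hadj
    rcases h with ⟨hne, e, he, p, hp⟩ | ⟨hb, hg⟩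
    · by_cases hb₂ : g⁻¹ • b₂ = D.hub
      · -- `g` now carries the template edge `(b, b₂)` onto an edge into the hub: it is pinned.
        have hreach : g⁻¹ • b ∈ D.reach (k + 1) := by
          rw [reach_succ]
          exact ⟨hb₂ ▸ hadj'.symm, Or.inl ⟨e, he, p, by omega⟩⟩
        refine Or.inr ⟨hb₂, 1, pow_subset_pow_right (mem_insert 1 _) (Nat.zero_le j) rfl, g,
          mem_insert_of_mem _ (mem_biUnion hreach (mem_biUnion hdart ?_)), one_mul g⟩
        simp [← hb₂]
      · have hstep : (Γ'.deleteVertex D.hub).Adj (g⁻¹ • b) (g⁻¹ • b₂) :=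
          ⟨hadj', hne, hb₂⟩
        exact Or.inl ⟨hb₂, e, D.reach_mono k.le_succ he, p.concat hstep,
          by rw [SimpleGraph.Walk.length_concat]; omega⟩
    · have hreach : g⁻¹ • b₂ ∈ D.reach (k + 1) := by
        rw [reach_succ]
        exact ⟨hb ▸ hadj',
          Or.inr ⟨g, mul_subset_mul (D.smear_mono hj) subset_rfl hg, _, hdart, rfl⟩⟩
      exact Or.inl ⟨(hb ▸ hadj').ne', _, hreach, .nil, Nat.zero_le _⟩

theorem tracks_edgeToRep_smul [IsTopologicalGroup G] {z z' : V} (hadj : Γ.Adj z z') {k j : ℕ}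
    (hk : k + D.lam ≤ D.budget) (hj : j ≤ D.maxSmear)
    (h : D.Tracks k j (D.P.edgeToRep z z') (D.P.edgeToRep z z' • D.φ z)) :
    D.Tracks (k + D.lam) j (D.P.edgeToRep z z') (D.P.edgeToRep z z' • D.φ z') := by
  have hends := edgeToRep_smul_mem_templateEnds D.P D.τ hadj
  have hlen := D.length_templateWalk_le _ hends
  exact (D.tracks_of_walk _ (fun d hd => mem_biUnion hends ⟨d, hd, rfl⟩) hj (by omega) h).mono
    (by omega) le_rfl

theorem isCompact_stabilizer_rep [IsTopologicalGroup G] {z : V} (hz : z ≠ D.v)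
    (hhub : D.φ z = D.hub) :
    IsCompact (stabilizer G (D.P.rep z) : Set G) := by
  rw [← D.P.toRep_smul, isCompact_stabilizer_smul_iff]
  by_contra hnc
  exact hz (D.eq_v_of_comparisonMap_eq z hhub hnc)

theorem tracks_edgeToRep_of_tracksVertex [IsTopologicalGroup G] {z z' : V} (hadj : Γ.Adj z z')
    (hz : z ≠ D.v) {k j : ℕ} (h : D.TracksVertex k j z) :
    D.Tracks k (j + 1) (D.P.edgeToRep z z') (D.P.edgeToRep z z' • D.φ z) := by
  rw [Tracks, inv_smul_smul]
  rcases h with h | ⟨hhub, hg⟩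
  · exact Or.inl h
  · have hs := D.mem_gens_of_mem_stabilizer (D.P.rep_mem z)
      (D.isCompact_stabilizer_rep hz hhub) (D.P.edgeToRep_mul_inv_toRep_mem hadj)
    exact Or.inr ⟨hhub, by simpa using D.mul_mem_smear_mul hs hg⟩

theorem tracksVertex_of_tracks_edgeToRep [IsTopologicalGroup G] {z z' : V} (hadj : Γ.Adj z z')
    (hz' : z' ≠ D.v) {k j : ℕ}
    (h : D.Tracks k j (D.P.edgeToRep z z') (D.P.edgeToRep z z' • D.φ z')) :
    D.TracksVertex k (j + 2) z' := by
  rw [Tracks, inv_smul_smul] at h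
  rcases h with h | ⟨hhub, hg⟩
  · exact Or.inl h
  · have hs := D.mem_gens_of_mem_stabilizer (D.P.rep_mem z')
      (D.isCompact_stabilizer_rep hz' hhub)
      (inv_mem (D.P.toRep_mul_edgeToRep_mul_inv_toRep_mem z z'))
    have hq := D.toRep_mem_gens (D.P.mem_edgeReps z z' hadj)
    refine Or.inr ⟨hhub, ?_⟩
    convert D.mul_mem_smear_mul hs (D.mul_mem_smear_mul hq hg) using 1
    group

theorem tracksVertex_of_walk [IsTopologicalGroup G] {a y : V}
    (R : (Γ.deleteVertex D.v).Walk a y) (ha : a = D.x) (hR : R.length ≤ D.n) :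
    D.TracksVertex ((R.length + 1) * D.lam) (3 * R.length + 2) y := by
  induction R using SimpleGraph.Walk.concatRec with
  | Hnil =>
    subst ha
    have hstart : D.Tracks 0 0 D.start (D.start • D.hub) :=
      Or.inr ⟨inv_smul_smul _ _, 1, rfl, D.start, mem_insert _ _, one_mul _⟩
    simpa using D.tracksVertex_of_tracks_edgeToRep D.adj_v_x D.adj_v_x.ne'
      (D.tracks_edgeToRep_smul D.adj_v_x (by simp only [budget, zero_add]; nlinarith)
        (Nat.zero_le _) hstart)
  | Hconcat R hadj ih =>
    rw [SimpleGraph.Walk.length_concat] at hR ⊢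
    have h := D.tracks_edgeToRep_smul hadj.1 (by simp only [budget]; nlinarith)
      (by simp only [maxSmear]; omega)
      (D.tracks_edgeToRep_of_tracksVertex hadj.1 hadj.2.1 (ih ha (by omega)))
    convert D.tracksVertex_of_tracks_edgeToRep hadj.1 hadj.2.2 h using 1 <;> ring

theorem exists_eq_inv_smul_rep [IsTopologicalGroup G] {y : V} (hy : Γ.Adj D.v y)
    (R : (Γ.deleteVertex D.v).Walk D.x y) (hR : R.length ≤ D.n) :
    ∃ g ∈ D.smear D.maxSmear * D.pinned (D.reach D.budget), y = g⁻¹ • D.P.rep y := by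
  have h := D.tracks_edgeToRep_smul hy.symm (by simp only [budget]; nlinarith)
    (by simp only [maxSmear]; omega)
    (D.tracks_edgeToRep_of_tracksVertex hy.symm hy.ne' (D.tracksVertex_of_walk R rfl hR))
  refine ⟨_, (h.mono (k' := D.budget) (j' := D.maxSmear) (by simp only [budget]; nlinarith)
    (by simp only [maxSmear]; omega)).mem_of_eq_hub (inv_smul_smul _ _), ?_⟩
  rw [← D.P.edgeToRep_smul y D.v hy.symm, inv_smul_smul]

theorem angleBall_finite [IsTopologicalGroup G] :
    {y | y ∈ Γ.neighborSet D.v ∧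
      ∃ p : (Γ.deleteVertex D.v).Walk D.x y, p.length ≤ D.n}.Finite := by
  refine (finite_inv_smul_of_isCompact ((D.isCompact_smear D.maxSmear).mul (D.isCompact_pinned
    (D.reach_finite D.budget) (D.reach_subset_neighborSet _))) D.P.vertReps_finite
    D.isDiscreteAction).subset ?_
  rintro y ⟨hy, R, hR⟩
  obtain ⟨g, hg, hgy⟩ := D.exists_eq_inv_smul_rep hy R hR
  exact ⟨g, hg, _, D.P.rep_mem y, hgy⟩

end FinenessTransfer

theorem IsCayleyAbelsGraph.fine_of_fine {G : Type u} [Group G] [TopologicalSpace G]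
    [IsTopologicalGroup G] {V : Type v} {V' : Type w} [MulAction G V] [MulAction G V']
    {Γ : SimpleGraph V} {Γ' : SimpleGraph V'} {ℋ : Finset (Subgroup G)}
    (h : IsCayleyAbelsGraph G ℋ Γ) (h' : IsCayleyAbelsGraph G ℋ Γ') (hfine' : Γ'.Fine) :
    Γ.Fine := by
  have hdisc : IsDiscreteAction G Γ := h.2.2.1
  have hcoc : IsCocompactAction G Γ := h.2.2.2.1
  intro v x hx n
  by_cases hv : IsCompact (stabilizer G v : Set G)
  · exact (neighborSet_finite_of_isCompact_stabilizer hdisc hcoc hv).subset fun y hy => hy.1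
  obtain ⟨P⟩ := hcoc.nonempty_orbitTransversal
  obtain ⟨τ, hτ⟩ := h.exists_isAnchor h'
  obtain ⟨hga', hconn', hdisc', -, hedge', -⟩ := h'
  obtain ⟨lam, hlam⟩ := exists_templateWalk_length_le P hτ hdisc' hconn'
  exact FinenessTransfer.angleBall_finite
    { P, τ, v, x, n, lam, isAnchor := hτ, isGraphAction' := hga', isDiscreteAction := hdisc,
      isDiscreteAction' := hdisc', hasCompactEdgeStabilizers' := hedge', connected' := hconn',
      adj_v_x := hx, eq_v_of_comparisonMap_eq := fun _ hz hnc =>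
        h.eq_of_comparisonMap_eq P hτ hnc hv hz,
      fineAt := hfine' _, length_templateWalk_le := hlam }

theorem cayleyAbels_unique_up_to_quasiIsometry_general
    {G : Type u} [Group G] [TopologicalSpace G] [IsTopologicalGroup G]
    (ℋ : Finset (Subgroup G))
    {V₁ : Type v} {V₂ : Type w} [MulAction G V₁] [MulAction G V₂]
    (Γ₁ : SimpleGraph V₁) (Γ₂ : SimpleGraph V₂)
    (h₁ : IsCayleyAbelsGraph G ℋ Γ₁) (h₂ : IsCayleyAbelsGraph G ℋ Γ₂) :
    QuasiIsometricGraphs Γ₁ Γ₂ ∧ (Γ₁.Fine → Γ₂.Fine) :=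
  ⟨h₁.quasiIsometricGraphs h₂, h₂.fine_of_fine h₁⟩

/-- Quasi-isometry invariance of Cayley-Abels graphs: any two Cayley-Abels graphs of a
proper pair `(G, ℋ)` are quasi-isometric, and if one is fine so is the other. -/
theorem cayleyAbels_unique_up_to_quasiIsometry
    {G : Type u} [Group G] [TopologicalSpace G] [IsTopologicalGroup G] [T2Space G]
    (ℋ : Finset (Subgroup G)) (hpp : IsProperPair G ℋ)
    {V₁ : Type v} {V₂ : Type w} [MulAction G V₁] [MulAction G V₂]
    (Γ₁ : SimpleGraph V₁) (Γ₂ : SimpleGraph V₂)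
    (h₁ : IsCayleyAbelsGraph G ℋ Γ₁) (h₂ : IsCayleyAbelsGraph G ℋ Γ₂) :
    QuasiIsometricGraphs Γ₁ Γ₂ ∧ (Γ₁.Fine → Γ₂.Fine) :=
  cayleyAbels_unique_up_to_quasiIsometry_general ℋ Γ₁ Γ₂ h₁ h₂
end

section
/- Let G be a Hausdorff topological group, A an open subgroup of G, and B, C subgroups of A that are open in G, with B ∩ C containing a compact open subgroup of G. Let t ∈ G be such that conjugation c ↦ t⁻¹ c t restricts to an isomorphism α : C → B, and suppose the canonical homomorphism from the HNN extension A∗_α = ⟨A, s ∣ s⁻¹ c s = α(c) for c ∈ C⟩ to G, which restricts to the inclusion on A and sends the stable letter s to t, is bijective. If G and C are compactly generated, then A (with the subspace topology) is compactly generated. -/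
open MulAction

universe u v

/-- The canonical homomorphism from the HNN extension `⟨A, s ∣ s⁻¹ c s = α(c), c ∈ C⟩`
to `G`, restricting to the inclusion on `A` and sending the stable letter to `t`.
(In Mathlib's `HNNExtension`, the stable letter `HNNExtension.t` satisfies
`t·c·t⁻¹ = α c`, so it corresponds to `s⁻¹` and is sent to `t⁻¹`.) -/
def hnnCanonicalHom {G : Type u} [Group G] (A : Subgroup G) (C B : Subgroup ↥A)
    (α : ↥C ≃* ↥B) (t : G)
    (hα : ∀ c : C, ((α c : ↥A) : G) = t⁻¹ * ((c : ↥A) : G) * t) :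
    HNNExtension ↥A C B α →* G :=
  HNNExtension.lift A.subtype t⁻¹ (by
    intro c
    have h := hα c
    simp only [Subgroup.coe_subtype]
    rw [h]
    group)

/-!
Cover a compact generating set of `G` by finitely many left translates of the compact open
subgroup `U ≤ A`: then `G` is generated by `U` and a finite set `F`. In the HNN extension each
element of `F` is a word in `t` and finitely many letters from `A`, so the HNN extension is
generated by `t` and `X ∪ U ∪ B ∪ C ⊆ A` with `X` finite. By Britton's lemma, an element of the
base group that is a word in `t` and letters from a subgroup `E ⊇ B ∪ C` of the base lies in `E`:
every pinch `t^u e t^-u` can be collapsed inside `E`. Hence `A` is generated by the compact set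
`X ∪ U` together with `C` and `B = t⁻¹ C t`, both compactly generated.
-/

namespace HNNExtension

open NormalWord Subgroup

variable {K : Type*} [Group K] {A B : Subgroup K} {φ : A ≃* B}

def NormalWord.ReducedWord.LettersIn (E : Subgroup K) (w : ReducedWord K A B) : Prop :=
  w.head ∈ E ∧ ∀ p ∈ w.toList, p.2 ∈ E

theorem of_toSubgroupEquiv (u : ℤˣ) (x : toSubgroup A B u) :
    (of (toSubgroupEquiv φ u x : K) : HNNExtension K A B φ) =
      t ^ (u : ℤ) * of (x : K) * (t ^ (u : ℤ))⁻¹ := by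
  rcases Int.units_eq_one_or u with rfl | rfl
  · simp only [Units.val_one, zpow_one]
    exact equiv_eq_conj x
  · simp only [Units.val_neg, Units.val_one, zpow_neg, zpow_one, inv_inv]
    exact equiv_symm_eq_conj x

variable {E : Subgroup K}

theorem exists_lettersIn_prod_eq_of_mul {w : ReducedWord K A B} (hw : w.LettersIn E) {g : K}
    (hg : g ∈ E) : ∃ w' : ReducedWord K A B, w'.LettersIn E ∧ w'.prod φ = of g * w.prod φ :=
  ⟨⟨g * w.head, w.toList, w.chain⟩, ⟨mul_mem hg hw.1, hw.2⟩, by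
    simp [ReducedWord.prod, mul_assoc]⟩

theorem exists_lettersIn_prod_eq_t_zpow_mul_of_not_cancels {w : ReducedWord K A B}
    (hw : w.LettersIn E) (u : ℤˣ)
    (h : ∀ p ∈ w.toList.head?, w.head ∈ toSubgroup A B u → u = p.1) :
    ∃ w' : ReducedWord K A B, w'.LettersIn E ∧ w'.prod φ = t ^ (u : ℤ) * w.prod φ := by
  refine ⟨⟨1, (u, w.head) :: w.toList, List.isChain_cons.2 ⟨h, w.chain⟩⟩,
    ⟨one_mem E, ?_⟩, by simp [ReducedWord.prod, mul_assoc]⟩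
  rintro p (_ | ⟨_, hp⟩)
  exacts [hw.1, hw.2 p hp]

theorem exists_lettersIn_prod_eq_t_zpow_mul_of_cancels (hA : A ≤ E) (hB : B ≤ E)
    {w : ReducedWord K A B} (hw : w.LettersIn E) {u : ℤˣ} {g : K} {L : List (ℤˣ × K)}
    (hL : w.toList = (-u, g) :: L) (hh : w.head ∈ toSubgroup A B u) :
    ∃ w' : ReducedWord K A B, w'.LettersIn E ∧ w'.prod φ = t ^ (u : ℤ) * w.prod φ := by
  rcases w with ⟨h, _, hc⟩
  subst hL
  have hφh : (toSubgroupEquiv φ u ⟨h, hh⟩ : K) ∈ E := by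
    rcases Int.units_eq_one_or u with rfl | rfl
    exacts [hB (toSubgroupEquiv φ 1 ⟨h, hh⟩).2, hA (toSubgroupEquiv φ (-1) ⟨h, hh⟩).2]
  refine ⟨⟨toSubgroupEquiv φ u ⟨h, hh⟩ * g, L, (List.isChain_cons.1 hc).2⟩,
    ⟨mul_mem hφh (hw.2 _ List.mem_cons_self), fun p hp => hw.2 p (List.mem_cons_of_mem _ hp)⟩,
    ?_⟩
  simp only [ReducedWord.prod, List.map_cons, List.prod_cons, map_mul, of_toSubgroupEquiv,
    Units.val_neg, zpow_neg]
  group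

theorem exists_lettersIn_prod_eq_t_zpow_mul (hA : A ≤ E) (hB : B ≤ E) {w : ReducedWord K A B}
    (hw : w.LettersIn E) (u : ℤˣ) :
    ∃ w' : ReducedWord K A B, w'.LettersIn E ∧ w'.prod φ = t ^ (u : ℤ) * w.prod φ := by
  rcases w with ⟨h, _ | ⟨⟨u₂, g⟩, L⟩, hc⟩
  · exact exists_lettersIn_prod_eq_t_zpow_mul_of_not_cancels hw u (by simp)
  by_cases hcancel : h ∈ toSubgroup A B u ∧ u₂ = -u
  · obtain ⟨hh, rfl⟩ := hcancel
    exact exists_lettersIn_prod_eq_t_zpow_mul_of_cancels hA hB hw rfl hh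
  · refine exists_lettersIn_prod_eq_t_zpow_mul_of_not_cancels hw u ?_
    simp only [List.head?_cons, Option.mem_def, Option.some.injEq, forall_eq']
    intro hh
    by_contra hne
    exact hcancel ⟨hh, Int.units_ne_iff_eq_neg.1 (Ne.symm hne)⟩

theorem exists_lettersIn_prod_eq_of_mem_closure (hA : A ≤ E) (hB : B ≤ E)
    {x : HNNExtension K A B φ} (hx : x ∈ closure (insert t (of '' (E : Set K)))) :
    ∃ w : ReducedWord K A B, w.LettersIn E ∧ w.prod φ = x := by
  induction hx using closure_induction_left with
  | one => exact ⟨ReducedWord.empty K A B, ⟨one_mem E, by simp⟩, by simp [ReducedWord.prod]⟩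
  | mul_left y hy x _ ih =>
    obtain ⟨w, hw, rfl⟩ := ih
    rcases hy with rfl | ⟨g, hg, rfl⟩
    · simpa using exists_lettersIn_prod_eq_t_zpow_mul hA hB hw 1
    · exact exists_lettersIn_prod_eq_of_mul hw hg
  | inv_mul_cancel y hy x _ ih =>
    obtain ⟨w, hw, rfl⟩ := ih
    rcases hy with rfl | ⟨g, hg, rfl⟩
    · simpa using exists_lettersIn_prod_eq_t_zpow_mul hA hB hw (-1)
    · simpa using exists_lettersIn_prod_eq_of_mul hw (inv_mem hg)

theorem of_mem_closure_insert_t_image_iff (hA : A ≤ E) (hB : B ≤ E) {g : K} :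
    (of g : HNNExtension K A B φ) ∈ closure (insert t (of '' (E : Set K))) ↔ g ∈ E := by
  refine ⟨fun hg => ?_, fun hg => subset_closure (Or.inr ⟨g, hg, rfl⟩)⟩
  obtain ⟨w, hw, hwg⟩ := exists_lettersIn_prod_eq_of_mem_closure hA hB hg
  have hnil : w.toList = [] := ReducedWord.toList_eq_nil_of_mem_of_range φ w (hwg ▸ ⟨g, rfl⟩)
  have hhead : of w.head = (of g : HNNExtension K A B φ) := by
    simpa [ReducedWord.prod, hnil] using hwg
  exact of_injective (φ := φ) hhead ▸ hw.1

theorem closure_union_eq_top_of_closure_insert_t_image_eq_top {Y : Set K}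
    (h : closure (insert t (of '' Y)) = (⊤ : Subgroup (HNNExtension K A B φ))) :
    closure (Y ∪ A ∪ B) = ⊤ := by
  have hA : A ≤ closure (Y ∪ A ∪ B) := fun a ha => subset_closure (Or.inl (Or.inr ha))
  have hB : B ≤ closure (Y ∪ A ∪ B) := fun b hb => subset_closure (Or.inr hb)
  refine (eq_top_iff' _).2 fun g => (of_mem_closure_insert_t_image_iff (φ := φ) hA hB).1 ?_
  refine closure_mono (Set.insert_subset_insert (Set.image_mono ?_)) (h ▸ mem_top (of g))
  exact Set.subset_union_left.trans (Set.subset_union_left.trans subset_closure)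

theorem exists_finite_mem_closure_insert_t_image (x : HNNExtension K A B φ) :
    ∃ X : Set K, X.Finite ∧ x ∈ closure (insert t (of '' X)) := by
  induction x using induction_on with
  | of g => exact ⟨{g}, Set.finite_singleton g, subset_closure (Or.inr ⟨g, rfl, rfl⟩)⟩
  | t => exact ⟨∅, Set.finite_empty, subset_closure (Set.mem_insert t _)⟩
  | mul x y hx hy =>
    obtain ⟨X, hX, hxX⟩ := hx
    obtain ⟨Y, hY, hyY⟩ := hy
    have hmono : ∀ Z ⊆ X ∪ Y, closure (insert t (of '' Z)) ≤
        closure (insert (t : HNNExtension K A B φ) (of '' (X ∪ Y))) := fun Z hZ =>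
      closure_mono (Set.insert_subset_insert (Set.image_mono hZ))
    exact ⟨X ∪ Y, hX.union hY,
      mul_mem (hmono X Set.subset_union_left hxX) (hmono Y Set.subset_union_right hyY)⟩
  | inv x hx =>
    obtain ⟨X, hX, hxX⟩ := hx
    exact ⟨X, hX, inv_mem hxX⟩

theorem exists_finite_closure_union_eq_top {T : Set (HNNExtension K A B φ)} (hT : T.Finite)
    {Y : Set K} (h : closure (T ∪ of '' Y) = ⊤) :
    ∃ X : Set K, X.Finite ∧ closure (X ∪ Y ∪ A ∪ B) = ⊤ := by
  choose X hX hxX using exists_finite_mem_closure_insert_t_image (φ := φ)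
  refine ⟨⋃ x ∈ T, X x, hT.biUnion fun x _ => hX x,
    closure_union_eq_top_of_closure_insert_t_image_eq_top (φ := φ) ?_⟩
  rw [eq_top_iff, ← h, closure_le]
  rintro x (hx | ⟨y, hy, rfl⟩)
  · refine closure_mono (Set.insert_subset_insert (Set.image_mono ?_)) (hxX x)
    exact (Set.subset_biUnion_of_mem hx).trans Set.subset_union_left
  · exact subset_closure (Or.inr ⟨y, Or.inr hy, rfl⟩)

end HNNExtension

section Topological

variable {G : Type*} [Group G] [TopologicalSpace G]

theorem IsCompact.exists_finset_subset_subgroupClosure_union [IsTopologicalGroup G] {S V : Set G}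
    (hS : IsCompact S) (hV : (interior V).Nonempty) :
    ∃ F : Finset G, S ⊆ Subgroup.closure (F ∪ V) := by
  obtain ⟨F, hF⟩ := compact_covered_by_mul_left_translates hS hV
  refine ⟨F, fun s hs => ?_⟩
  obtain ⟨g, hg, hgs⟩ := Set.mem_iUnion₂.1 (hF hs)
  rw [← inv_mul_cancel_left g s]
  exact mul_mem (inv_mem (Subgroup.subset_closure (Or.inl hg))) (Subgroup.subset_closure (Or.inr hgs))

theorem IsCompactlyGeneratedGroup.of_surjective {H : Type*} [Group H] [TopologicalSpace H]
    (hG : IsCompactlyGeneratedGroup G) (f : G →* H) (hf : Continuous f)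
    (hsurj : Function.Surjective f) : IsCompactlyGeneratedGroup H := by
  obtain ⟨S, hS, hSG⟩ := hG
  exact ⟨f '' S, hS.image hf, by rw [← MonoidHom.map_closure, hSG, Subgroup.map_top_of_surjective f hsurj]⟩

theorem Subgroup.exists_isCompact_closure_eq {H : Subgroup G}
    (hH : IsCompactlyGeneratedGroup H) : ∃ S : Set G, IsCompact S ∧ Subgroup.closure S = H := by
  obtain ⟨S, hS, hSH⟩ := hH
  exact ⟨H.subtype '' S, hS.image continuous_subtype_val, by
    rw [← MonoidHom.map_closure, hSH, ← MonoidHom.range_eq_map, range_subtype]⟩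

theorem isCompactlyGeneratedGroup_of_closure_union_eq_top {S : Set G} (hS : IsCompact S)
    {L M : Subgroup G} (hL : IsCompactlyGeneratedGroup L) (hM : IsCompactlyGeneratedGroup M)
    (h : Subgroup.closure (S ∪ L ∪ M) = ⊤) : IsCompactlyGeneratedGroup G := by
  obtain ⟨P, hP, rfl⟩ := L.exists_isCompact_closure_eq hL
  obtain ⟨Q, hQ, rfl⟩ := M.exists_isCompact_closure_eq hM
  exact ⟨S ∪ P ∪ Q, (hS.union hP).union hQ, by simpa only [Subgroup.closure_union, Subgroup.closure_eq] using h⟩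

theorem continuous_of_coe_eq_conj [IsTopologicalGroup G] {A : Subgroup G} {C B : Subgroup A}
    (f : C → B) (t : G) (hf : ∀ c : C, ((f c : A) : G) = t⁻¹ * ((c : A) : G) * t) :
    Continuous f := by
  refine (Topology.IsEmbedding.subtypeVal.comp Topology.IsEmbedding.subtypeVal).continuous_iff.2 ?_
  simp only [Function.comp_def, hf]
  fun_prop

end Topological

theorem isCompactlyGenerated_base_of_hnn_general
    {G : Type u} [Group G] [TopologicalSpace G] [IsTopologicalGroup G]
    (A : Subgroup G)
    (C B : Subgroup ↥A)
    (hU : ∃ U : Subgroup G, IsCompact (U : Set G) ∧ IsOpen (U : Set G) ∧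
      (U : Set G) ⊆ A.subtype '' ((B ⊓ C : Subgroup ↥A) : Set ↥A))
    (t : G) (α : ↥C ≃* ↥B)
    (hα : ∀ c : C, ((α c : ↥A) : G) = t⁻¹ * ((c : ↥A) : G) * t)
    (hsplit : Function.Bijective (hnnCanonicalHom A C B α t hα))
    (hG : IsCompactlyGeneratedGroup G) (hC : IsCompactlyGeneratedGroup ↥C) :
    IsCompactlyGeneratedGroup ↥A := by
  obtain ⟨S, hS, hSG⟩ := hG
  obtain ⟨U, hUc, hUo, hUBC⟩ := hU
  set UA : Set A := (↑) ⁻¹' (U : Set G)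
  have hUA : Subtype.val '' UA = U :=
    Set.image_preimage_eq_of_subset (hUBC.trans (Set.image_subset_range _ _))
  have hUAc : IsCompact UA := Subtype.isCompact_iff.2 (hUA ▸ hUc)
  obtain ⟨F, hF⟩ := hS.exists_finset_subset_subgroupClosure_union (V := U) (by
    rw [hUo.interior_eq]; exact ⟨1, one_mem U⟩)
  let e := MulEquiv.ofBijective _ hsplit
  have he : ∀ a : A, e.symm a = HNNExtension.of a := fun a =>
    e.symm_apply_eq.2 (by simp [e, hnnCanonicalHom])
  have hFU : Subgroup.closure ((F : Set G) ∪ U) = ⊤ := by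
    rw [eq_top_iff, ← hSG]
    exact (Subgroup.closure_le _).2 hF
  have hofUA : HNNExtension.of '' UA = e.symm '' U := by
    rw [← hUA, Set.image_image]
    exact Set.image_congr fun a _ => (he a).symm
  have hgen : Subgroup.closure (e.symm '' F ∪ HNNExtension.of '' UA) = ⊤ := by
    rw [hofUA, ← Set.image_union, ← MulEquiv.coe_toMonoidHom, ← MonoidHom.map_closure, hFU,
      Subgroup.map_top_of_surjective _ e.symm.surjective]
  obtain ⟨X, hX, hXA⟩ := HNNExtension.exists_finite_closure_union_eq_top
    (F.finite_toSet.image _) hgen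
  have hB : IsCompactlyGeneratedGroup B :=
    hC.of_surjective α.toMonoidHom (continuous_of_coe_eq_conj α t hα) α.surjective
  exact isCompactlyGeneratedGroup_of_closure_union_eq_top (hX.isCompact.union hUAc) hC hB hXA

/-- If `G` is an HNN extension of an open subgroup `A` over subgroups `B`, `C` of `A`
which are open in `G`, with `B ⊓ C` containing a compact open subgroup of `G`, the stable
letter acting by conjugation by `t`, and `G` and `C` are compactly generated, then `A` is
compactly generated. -/
theorem isCompactlyGenerated_base_of_hnn
    {G : Type u} [Group G] [TopologicalSpace G] [IsTopologicalGroup G] [T2Space G]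
    (A : Subgroup G) (hAopen : IsOpen (A : Set G))
    (C B : Subgroup ↥A)
    (hCopen : IsOpen (A.subtype '' (C : Set ↥A)))
    (hBopen : IsOpen (A.subtype '' (B : Set ↥A)))
    (hU : ∃ U : Subgroup G, IsCompact (U : Set G) ∧ IsOpen (U : Set G) ∧
      (U : Set G) ⊆ A.subtype '' ((B ⊓ C : Subgroup ↥A) : Set ↥A))
    (t : G) (α : ↥C ≃* ↥B)
    (hα : ∀ c : C, ((α c : ↥A) : G) = t⁻¹ * ((c : ↥A) : G) * t)
    (hsplit : Function.Bijective (hnnCanonicalHom A C B α t hα))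
    (hG : IsCompactlyGeneratedGroup G) (hC : IsCompactlyGeneratedGroup ↥C) :
    IsCompactlyGeneratedGroup ↥A :=
  isCompactlyGenerated_base_of_hnn_general A C B hU t α hα hsplit hG hC
end

section
/- Let G be a Hausdorff topological group with open subgroups A and B such that C = A ∩ B is compact and G splits as the amalgamated free product A ∗_C B. If A and B (with the subspace topology) are compactly presented, then G is compactly presented. -/
open MulAction

universe u v

/-!
Enlarge compact presentations of `A` and `B` so that their generating sets contain the compact
subgroup `C = A ∩ B`: by the Baire category theorem on `C`, every element of `C` is a word of
bounded length in the old generators, so a Tietze transformation keeps the relators short. The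
union `S` of the two generating sets is compact and generates `G`, and the presented group on `S`
with relators of bounded length receives compatible homomorphisms from `A` and `B` (the letters
of `C` are shared), hence one from `A ∗_C B = G` inverting the canonical map.
-/

open Pointwise Set

section Presentations

variable {H : Type*} [Group H]

def shortRelators (S : Set H) (n : ℕ) : Set (FreeGroup S) :=
  {x | x ∈ (FreeGroup.lift (fun s : S => (s : H))).ker ∧
    ∃ l : List (S × Bool), FreeGroup.mk l = x ∧ l.length ≤ n}

def IsPresentedBy (S : Set H) (n : ℕ) : Prop :=
  Subgroup.normalClosure (shortRelators S n) = (FreeGroup.lift (fun s : S => (s : H))).ker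

theorem isCompactlyPresentedGroup_iff [TopologicalSpace H] :
    IsCompactlyPresentedGroup H ↔
      ∃ (S : Set H) (n : ℕ), IsCompact S ∧ Subgroup.closure S = ⊤ ∧ IsPresentedBy S n :=
  Iff.rfl

def presentationHom (S : Set H) (n : ℕ) : PresentedGroup (shortRelators S n) →* H :=
  PresentedGroup.toGroup fun _ hx => hx.1

variable {S : Set H} {n : ℕ}

@[simp]
theorem presentationHom_of (s : S) : presentationHom S n (PresentedGroup.of s) = s :=
  PresentedGroup.toGroup.of _

theorem presentationHom_surjective (hgen : Subgroup.closure S = ⊤) :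
    Function.Surjective (presentationHom S n) := by
  rw [← MonoidHom.range_eq_top, eq_top_iff, ← hgen, Subgroup.closure_le]
  exact fun s hs => ⟨PresentedGroup.of ⟨s, hs⟩, presentationHom_of _⟩

theorem isPresentedBy_iff_injective :
    IsPresentedBy S n ↔ Function.Injective (presentationHom S n) := by
  rw [injective_iff_map_eq_one]
  constructor
  · intro hpres x hx
    induction x using PresentedGroup.induction_on with
    | H w => exact PresentedGroup.mk_eq_one_iff.2 (hpres ▸ hx)
  · intro hinj
    refine le_antisymm (Subgroup.normalClosure_le_normal fun x hx => hx.1) fun w hw => ?_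
    exact PresentedGroup.mk_eq_one_iff.1 (hinj _ hw)

theorem isPresentedBy_of_section (ψ : H →* PresentedGroup (shortRelators S n))
    (hψ : ∀ s : S, ψ s = PresentedGroup.of s) : IsPresentedBy S n := by
  have hinv : ψ.comp (presentationHom S n) = MonoidHom.id _ :=
    PresentedGroup.ext fun s => by simp [hψ]
  exact isPresentedBy_iff_injective.2 (Function.LeftInverse.injective (g := ψ)
    (DFunLike.congr_fun hinv))

variable {H' : Type*} [Group H'] {S' : Set H'} {n' : ℕ}

theorem lift_comp_map_eq (φ : H →* H') (f : S → S') (hf : ∀ s, (f s : H') = φ s) :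
    (FreeGroup.lift (fun s : S' => (s : H'))).comp (FreeGroup.map f) =
      φ.comp (FreeGroup.lift (fun s : S => (s : H))) :=
  FreeGroup.ext_hom _ _ fun s => by simp [hf]

theorem mapsTo_shortRelators (φ : H →* H') (f : S → S') (hf : ∀ s, (f s : H') = φ s)
    (hn : n ≤ n') :
    MapsTo (FreeGroup.map f) (shortRelators S n) (shortRelators S' n') := by
  rintro _ ⟨hker, l, rfl, hl⟩
  refine ⟨?_, l.map fun x => (f x.1, x.2), FreeGroup.map.mk.symm, by simpa using hl.trans hn⟩
  rw [MonoidHom.mem_ker, ← MonoidHom.comp_apply, lift_comp_map_eq φ f hf,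
    MonoidHom.comp_apply, hker, map_one]

theorem IsPresentedBy.exists_hom_presentedGroup (hpres : IsPresentedBy S n)
    (hgen : Subgroup.closure S = ⊤) (φ : H →* H') (f : S → S')
    (hf : ∀ s, (f s : H') = φ s) (hn : n ≤ n') :
    ∃ ψ : H →* PresentedGroup (shortRelators S' n'),
      ∀ s : S, ψ s = PresentedGroup.of (f s) := by
  let e := MulEquiv.ofBijective (presentationHom S n)
    ⟨isPresentedBy_iff_injective.1 hpres, presentationHom_surjective hgen⟩
  refine ⟨(PresentedGroup.map (FreeGroup.map f) (mapsTo_shortRelators φ f hf hn)).comp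
    e.symm.toMonoidHom, fun s => ?_⟩
  have hs : e.symm s = PresentedGroup.of s := e.symm_apply_eq.2 (presentationHom_of (n := n) s).symm
  simp only [MonoidHom.comp_apply, MulEquiv.coe_toMonoidHom, hs]
  rfl

end Presentations

section WordBalls

variable {H : Type*} [Group H]

def unitBall (T : Set H) : Set H := insert 1 (T ∪ T⁻¹)

variable {T : Set H}

theorem one_mem_unitBall : (1 : H) ∈ unitBall T := mem_insert 1 _

theorem subset_unitBall : T ⊆ unitBall T := fun _ h => Or.inr (Or.inl h)

theorem inv_unitBall_pow (m : ℕ) : (unitBall T ^ m)⁻¹ = unitBall T ^ m := by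
  rw [← inv_pow]
  congr 1
  ext x
  simp only [unitBall, Set.mem_inv, mem_insert_iff, mem_union, inv_eq_one, inv_inv]
  tauto

theorem exists_mem_unitBall_pow_of_mem_closure {h : H} (hh : h ∈ Subgroup.closure T) :
    ∃ m, h ∈ unitBall T ^ m := by
  induction hh using Subgroup.closure_induction with
  | mem x hx => exact ⟨1, by simpa using subset_unitBall hx⟩
  | one => exact ⟨0, by simp⟩
  | mul x y _ _ hx hy =>
    obtain ⟨a, ha⟩ := hx
    obtain ⟨b, hb⟩ := hy
    exact ⟨a + b, pow_add (unitBall T) a b ▸ mul_mem_mul ha hb⟩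
  | inv x _ hx =>
    obtain ⟨a, ha⟩ := hx
    exact ⟨a, inv_unitBall_pow (T := T) a ▸ Set.inv_mem_inv.2 ha⟩

theorem exists_list_of_mem_unitBall {h : H} (hh : h ∈ unitBall T) :
    ∃ l : List (T × Bool), l.length ≤ 1 ∧
      FreeGroup.lift (fun t : T => (t : H)) (.mk l) = h := by
  rcases hh with rfl | ht | ht
  · exact ⟨[], by simp⟩
  · exact ⟨[(⟨h, ht⟩, true)], by simp⟩
  · exact ⟨[(⟨h⁻¹, ht⟩, false)], by simp⟩

theorem exists_list_of_mem_unitBall_pow {m : ℕ} {h : H} (hh : h ∈ unitBall T ^ m) :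
    ∃ l : List (T × Bool), l.length ≤ m ∧
      FreeGroup.lift (fun t : T => (t : H)) (.mk l) = h := by
  induction m generalizing h with
  | zero => exact ⟨[], by simp_all⟩
  | succ m ih =>
    obtain ⟨a, ha, d, hd, rfl⟩ := (pow_succ (unitBall T) m) ▸ hh
    obtain ⟨l, hl, rfl⟩ := ih ha
    obtain ⟨l', hl', rfl⟩ := exists_list_of_mem_unitBall hd
    exact ⟨l ++ l', by simp only [List.length_append]; omega, by simp⟩

theorem IsPresentedBy.union_of_subset_unitBall_pow {n m : ℕ} (hpres : IsPresentedBy T n)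
    (hgen : Subgroup.closure T = ⊤) {T' : Set H} (hT' : T' ⊆ unitBall T ^ m) :
    IsPresentedBy (T ∪ T') (max n (m + 1)) := by
  obtain ⟨ψ, hψ⟩ := hpres.exists_hom_presentedGroup hgen (MonoidHom.id H)
    (inclusion (subset_union_left (t := T'))) (fun _ => rfl) (le_max_left n (m + 1))
  have hψlift : ψ.comp (FreeGroup.lift fun t : T => (t : H)) =
      (PresentedGroup.mk _).comp (FreeGroup.map (inclusion subset_union_left)) :=
    FreeGroup.ext_hom _ _ fun t => by
      simp only [MonoidHom.comp_apply, FreeGroup.lift_apply_of, FreeGroup.map.of]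
      exact hψ t
  refine isPresentedBy_of_section ψ ?_
  rintro ⟨s, hs | hs⟩
  · exact hψ ⟨s, hs⟩
  · obtain ⟨l, hl, rfl⟩ := exists_list_of_mem_unitBall_pow (hT' hs)
    refine (DFunLike.congr_fun hψlift _).trans
      (PresentedGroup.mk_eq_mk_of_inv_mul_mem ?_).symm
    -- the Tietze relator `s⁻¹ w`, of length at most `m + 1`
    refine ⟨?_,
      (⟨_, Or.inr hs⟩, false) :: l.map fun x => (inclusion subset_union_left x.1, x.2),
      by rw [FreeGroup.map.mk]; rfl, by simp only [List.length_cons, List.length_map]; omega⟩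
    rw [MonoidHom.mem_ker, map_mul, ← MonoidHom.comp_apply _ (FreeGroup.map _),
      lift_comp_map_eq (MonoidHom.id H) (inclusion subset_union_left) fun _ => rfl]
    simp

end WordBalls

section CompactGeneration

variable {H : Type*} [Group H] [TopologicalSpace H] [IsTopologicalGroup H] {T : Set H}

theorem IsCompact.unitBall_pow (hT : IsCompact T) (m : ℕ) : IsCompact (unitBall T ^ m) := by
  induction m with
  | zero => simp
  | succ m ih => exact pow_succ (unitBall T) m ▸ ih.mul ((hT.union hT.inv).insert 1)

theorem IsCompact.exists_subset_unitBall_pow [T2Space H] (hT : IsCompact T)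
    (hgen : Subgroup.closure T = ⊤) {K : Subgroup H} (hK : IsCompact (K : Set H)) :
    ∃ M, (K : Set H) ⊆ unitBall T ^ M := by
  have : CompactSpace K := isCompact_iff_compactSpace.mp hK
  have hball : ∀ h : H, ∃ m, h ∈ unitBall T ^ m := fun h =>
    exists_mem_unitBall_pow_of_mem_closure (hgen ▸ Subgroup.mem_top h)
  -- Baire category theorem in the compact Hausdorff group `K`
  let V : ℕ → Set K := fun m => (↑) ⁻¹' (unitBall T ^ m)
  have hVclosed : ∀ m, IsClosed (V m) := fun m =>
    (hT.unitBall_pow m).isClosed.preimage continuous_subtype_val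
  have hVcover : ⋃ m, V m = univ := eq_univ_of_forall fun k => mem_iUnion.2 (hball k)
  obtain ⟨m₀, hm₀⟩ := nonempty_interior_of_iUnion_of_closed hVclosed hVcover
  obtain ⟨t, ht⟩ := compact_covered_by_mul_left_translates isCompact_univ hm₀
  choose m hm using fun g : K => hball (g⁻¹ : H)
  refine ⟨t.sup m + m₀, fun k hk => ?_⟩
  obtain ⟨g, hg, hgk⟩ := mem_iUnion₂.1 (ht (mem_univ ⟨k, hk⟩))
  have hk : k = (g⁻¹ : H) * (g * k) := by group
  rw [hk, pow_add]
  exact mul_mem_mul (pow_subset_pow_right one_mem_unitBall (Finset.le_sup hg) (hm g)) hgk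

theorem IsCompactlyPresentedGroup.exists_isPresentedBy_superset [T2Space H]
    (hH : IsCompactlyPresentedGroup H) {K : Subgroup H} (hK : IsCompact (K : Set H)) :
    ∃ (T : Set H) (n : ℕ), IsCompact T ∧ (K : Set H) ⊆ T ∧ Subgroup.closure T = ⊤ ∧
      IsPresentedBy T n := by
  obtain ⟨S, n, hS, hgen, hpres⟩ := isCompactlyPresentedGroup_iff.1 hH
  obtain ⟨M, hM⟩ := hS.exists_subset_unitBall_pow hgen hK
  exact ⟨S ∪ K, max n (M + 1), hS.union hK, subset_union_right,
    top_unique (hgen ▸ Subgroup.closure_mono subset_union_left),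
    hpres.union_of_subset_unitBall_pow hgen hM⟩

end CompactGeneration

theorem IsCompact.subgroupOf {G : Type*} [Group G] [TopologicalSpace G] {K L : Subgroup G}
    (hK : IsCompact (K : Set G)) (hKL : K ≤ L) : IsCompact (K.subgroupOf L : Set L) := by
  rw [Subgroup.coe_subgroupOf]
  exact (Topology.IsInducing.subtypeVal.isCompact_preimage_iff (by simpa using hKL)).2 hK

section Amalgam

variable {G : Type u} [Group G] {A B : Subgroup G}

theorem amalgamCanonicalHom_of (i : Bool) (x : amalgamFamily A B i) :
    amalgamCanonicalHom A B (Monoid.PushoutI.of i x) = amalgamProj A B i x :=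
  Monoid.PushoutI.lift_of _ _ _ _

namespace IsAmalgamatedProduct

theorem sup_eq_top (hsplit : IsAmalgamatedProduct A B) : A ⊔ B = ⊤ := by
  rw [eq_top_iff, ← MonoidHom.range_eq_top.2 hsplit.2]
  rintro _ ⟨x, rfl⟩
  induction x using Monoid.PushoutI.induction_on with
  | of i x =>
    rw [amalgamCanonicalHom_of]
    cases i
    · exact le_sup_right (α := Subgroup G) x.2
    · exact le_sup_left (α := Subgroup G) x.2
  | base c =>
    rw [amalgamCanonicalHom, Monoid.PushoutI.lift_base]
    exact le_sup_left (α := Subgroup G) c.2.1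
  | mul x y hx hy => exact map_mul (amalgamCanonicalHom A B) x y ▸ mul_mem hx hy

theorem exists_lift (hsplit : IsAmalgamatedProduct A B) {Q : Type*} [Group Q]
    (fA : A →* Q) (fB : B →* Q)
    (hfAB : ∀ c : ↥(A ⊓ B), fA (Subgroup.inclusion inf_le_left c) =
      fB (Subgroup.inclusion inf_le_right c)) :
    ∃ ψ : G →* Q, (∀ a : A, ψ a = fA a) ∧ ∀ b : B, ψ b = fB b := by
  let e := MulEquiv.ofBijective _ hsplit
  let f : (i : Bool) → amalgamFamily A B i →* Q
    | true => fA
    | false => fB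
  let Φ := Monoid.PushoutI.lift (φ := amalgamMaps A B) f
      (fA.comp (Subgroup.inclusion (inf_le_left : A ⊓ B ≤ A))) <| by
    rintro (_ | _) <;> ext c
    exacts [(hfAB c).symm, rfl]
  have hΦ (i : Bool) (x : amalgamFamily A B i) :
      Φ.comp e.symm.toMonoidHom (amalgamProj A B i x) = f i x := by
    have : e.symm (amalgamProj A B i x) = Monoid.PushoutI.of i x :=
      e.symm_apply_eq.2 (amalgamCanonicalHom_of i x).symm
    simp only [MonoidHom.comp_apply, MulEquiv.coe_toMonoidHom, this, Φ, Monoid.PushoutI.lift_of]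
  exact ⟨Φ.comp e.symm.toMonoidHom, hΦ true, hΦ false⟩

theorem isPresentedBy (hsplit : IsAmalgamatedProduct A B) {TA : Set A} {TB : Set B}
    {nA nB : ℕ} (hA : IsPresentedBy TA nA) (hAgen : Subgroup.closure TA = ⊤)
    (hCA : ((A ⊓ B).subgroupOf A : Set A) ⊆ TA) (hB : IsPresentedBy TB nB)
    (hBgen : Subgroup.closure TB = ⊤) (hCB : ((A ⊓ B).subgroupOf B : Set B) ⊆ TB) :
    IsPresentedBy ((↑) '' TA ∪ (↑) '' TB : Set G) (max nA nB) := by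
  let S : Set G := (↑) '' TA ∪ (↑) '' TB
  obtain ⟨ψA, hψA⟩ := hA.exists_hom_presentedGroup hAgen A.subtype (S' := S)
    (fun t => ⟨t, mem_union_left _ (mem_image_of_mem _ t.2)⟩) (fun _ => rfl)
    (le_max_left nA nB)
  obtain ⟨ψB, hψB⟩ := hB.exists_hom_presentedGroup hBgen B.subtype (S' := S)
    (fun t => ⟨t, mem_union_right _ (mem_image_of_mem _ t.2)⟩) (fun _ => rfl)
    (le_max_right nA nB)
  -- the letters of `A ⊓ B` in `TA` and in `TB` are the same letter of the union
  obtain ⟨ψ, hψA', hψB'⟩ := hsplit.exists_lift ψA ψB fun c =>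
    (hψA ⟨Subgroup.inclusion inf_le_left c, hCA c.2⟩).trans
      (hψB ⟨Subgroup.inclusion inf_le_right c, hCB c.2⟩).symm
  refine isPresentedBy_of_section ψ ?_
  rintro ⟨_, ⟨t, ht, rfl⟩ | ⟨t, ht, rfl⟩⟩
  · exact (hψA' t).trans (hψA ⟨t, ht⟩)
  · exact (hψB' t).trans (hψB ⟨t, ht⟩)

end IsAmalgamatedProduct

end Amalgam

theorem isCompactlyPresented_of_amalgamatedProduct_general
    {G : Type u} [Group G] [TopologicalSpace G] [IsTopologicalGroup G] [T2Space G]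
    (A B : Subgroup G)
    (hCcompact : IsCompact ((A ⊓ B : Subgroup G) : Set G))
    (hsplit : IsAmalgamatedProduct A B)
    (hA : IsCompactlyPresentedGroup A) (hB : IsCompactlyPresentedGroup B) :
    IsCompactlyPresentedGroup G := by
  obtain ⟨TA, nA, hTA, hCA, hAgen, hApres⟩ :=
    hA.exists_isPresentedBy_superset (hCcompact.subgroupOf inf_le_left)
  obtain ⟨TB, nB, hTB, hCB, hBgen, hBpres⟩ :=
    hB.exists_isPresentedBy_superset (hCcompact.subgroupOf inf_le_right)
  have hgen : Subgroup.closure (A.subtype '' TA ∪ B.subtype '' TB) = ⊤ := by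
    rw [Subgroup.closure_union, ← MonoidHom.map_closure, ← MonoidHom.map_closure, hAgen, hBgen,
      ← MonoidHom.range_eq_map, ← MonoidHom.range_eq_map, Subgroup.range_subtype,
      Subgroup.range_subtype, hsplit.sup_eq_top]
  exact isCompactlyPresentedGroup_iff.2 ⟨_, max nA nB, (hTA.image continuous_subtype_val).union
    (hTB.image continuous_subtype_val), hgen,
    hsplit.isPresentedBy hApres hAgen hCA hBpres hBgen hCB⟩

/-- If a (Hausdorff) topological group `G` splits as an amalgamated free product of two
open subgroups `A` and `B` with compact intersection, and `A` and `B` are compactly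
presented, then `G` is compactly presented. -/
theorem isCompactlyPresented_of_amalgamatedProduct
    {G : Type u} [Group G] [TopologicalSpace G] [IsTopologicalGroup G] [T2Space G]
    (A B : Subgroup G) (hAopen : IsOpen (A : Set G)) (hBopen : IsOpen (B : Set G))
    (hCcompact : IsCompact ((A ⊓ B : Subgroup G) : Set G))
    (hsplit : IsAmalgamatedProduct A B)
    (hA : IsCompactlyPresentedGroup A) (hB : IsCompactlyPresentedGroup B) :
    IsCompactlyPresentedGroup G :=
  isCompactlyPresented_of_amalgamatedProduct_general A B hCcompact hsplit hA hB
end
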